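/- arXiv:math/0508008 — 2 statements merged into one kernel-verified Lean document; each statement's English description precedes it below -/
import Mathlib

section
/- The dual Jacobi–Trudi identity holds: for a partition λ with conjugate λ' of length at most m, s_λ = det(e_{λ'_i − i + j})_{i,j=1}^{m}, where e_0 = 1 and e_k = 0 for k < 0. -/
open MvPolynomial in
/-- The cells of the skew diagram `lam/mu`: pairs `(i, j)` (row `i`, column `j`,
both 0-indexed, rows increasing downwards) with `mu i ≤ j < lam i`. -/
def skewCells {L : ℕ} (lam mu : Fin L → ℕ) : Finset (Fin L × ℕ) :=
  (Finset.univ ×ˢ Finset.range (Finset.univ.sup lam)).filter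
    fun p => mu p.1 ≤ p.2 ∧ p.2 < lam p.1

/-- A filling of the skew shape `lam/mu` with entries in `Fin nv` is a semistandard
Young tableau if rows weakly increase (left to right) and columns strictly
increase (top to bottom). -/
def IsSSYT {nv L : ℕ} (lam mu : Fin L → ℕ)
    (T : { x // x ∈ skewCells lam mu } → Fin nv) : Prop :=
  (∀ c c' : { x // x ∈ skewCells lam mu },
      c.1.1 = c'.1.1 → c.1.2 ≤ c'.1.2 → T c ≤ T c') ∧
  (∀ c c' : { x // x ∈ skewCells lam mu },
      c.1.2 = c'.1.2 → c.1.1 < c'.1.1 → T c < T c')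

open scoped Classical in
/-- The skew Schur polynomial of shape `lam/mu` in `nv` variables: the generating
function of semistandard Young tableaux of shape `lam/mu` with entries in `Fin nv`. -/
noncomputable def skewSchur (nv : ℕ) {L : ℕ} (lam mu : Fin L → ℕ) :
    MvPolynomial (Fin nv) ℤ :=
  ∑ T : { x // x ∈ skewCells lam mu } → Fin nv,
    if IsSSYT lam mu T then ∏ c : { x // x ∈ skewCells lam mu }, MvPolynomial.X (T c)
    else 0

/-!
Expanding the determinant, a term is a permutation `σ` together with subsets
`S k ⊆ {0, …, n - 1}` of sizes `λ'_k - k + σ k`. Read `S k` as a lattice path which starts at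
height `-σ k`, goes up at time `s` iff `s ∈ S k`, and ends at height `λ'_k - k`. On families in
which some paths meet, exchanging the parts before the earliest meeting time of two paths meeting
at that time is a sign-reversing, weight-preserving involution (Lindström–Gessel–Viennot), so
only families of pairwise non-meeting paths remain. Since the end heights strictly decrease,
these have `σ = 1`, and they are exactly the column sets of the semistandard tableaux of shape
`λ`: column `k` is `S k` listed increasingly, and the paths not meeting says that the rows weakly
increase.
-/

open Finset

section CountBelow

variable {n : ℕ}

def countBelow (A : Finset (Fin n)) (t : ℕ) : ℕ := #{s ∈ A | s.val < t}

@[simp]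
lemma countBelow_zero (A : Finset (Fin n)) : countBelow A 0 = 0 := by
  simp [countBelow]

lemma countBelow_of_le {A : Finset (Fin n)} {t : ℕ} (h : n ≤ t) : countBelow A t = #A := by
  rw [countBelow, filter_true_of_mem fun s _ => s.isLt.trans_le h]

lemma countBelow_min (A : Finset (Fin n)) (t : ℕ) : countBelow A (min t n) = countBelow A t := by
  unfold countBelow
  congr 1
  ext s
  simp

lemma countBelow_mono (A : Finset (Fin n)) : Monotone (countBelow A) :=
  fun _ _ h => card_le_card <| monotone_filter_right A fun _ _ hs => hs.trans_le h

lemma countBelow_succ_le (A : Finset (Fin n)) (t : ℕ) :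
    countBelow A (t + 1) ≤ countBelow A t + 1 := by
  have hsub : {s ∈ A | s.val < t + 1} ⊆ {s ∈ A | s.val < t} ∪ {s ∈ A | s.val = t} := by
    intro s
    simp only [mem_filter, mem_union]
    grind
  have hone : #{s ∈ A | s.val = t} ≤ 1 :=
    card_le_one.mpr fun a ha b hb =>
      Fin.ext <| (mem_filter.mp ha).2.trans (mem_filter.mp hb).2.symm
  exact (card_le_card hsub).trans <| (card_union_le _ _).trans <| Nat.add_le_add_left hone _

lemma countBelow_add_card_filter_Ico (A : Finset (Fin n)) {t₀ t : ℕ} (h : t₀ ≤ t) :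
    countBelow A t₀ + #{s ∈ A | t₀ ≤ s.val ∧ s.val < t} = countBelow A t := by
  rw [countBelow, countBelow, ← card_union_of_disjoint]
  · congr 1
    ext s
    simp only [mem_union, mem_filter]
    grind
  · exact disjoint_filter.mpr fun _ _ h₁ h₂ => by omega

def replacePrefix (A B : Finset (Fin n)) (t : ℕ) : Finset (Fin n) :=
  {s ∈ B | s.val < t} ∪ {s ∈ A | t ≤ s.val}

lemma mem_replacePrefix {A B : Finset (Fin n)} {t : ℕ} {s : Fin n} :
    s ∈ replacePrefix A B t ↔ if s.val < t then s ∈ B else s ∈ A := by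
  simp only [replacePrefix, mem_union, mem_filter]
  grind

lemma countBelow_replacePrefix_of_le (A B : Finset (Fin n)) {t₀ t : ℕ} (h : t ≤ t₀) :
    countBelow (replacePrefix A B t₀) t = countBelow B t := by
  unfold countBelow
  congr 1
  ext s
  simp only [mem_filter, mem_replacePrefix]
  grind

lemma countBelow_replacePrefix_of_ge (A B : Finset (Fin n)) {t₀ t : ℕ} (h : t₀ ≤ t) :
    countBelow (replacePrefix A B t₀) t + countBelow A t₀ =
      countBelow B t₀ + countBelow A t := by
  have hband : #{s ∈ replacePrefix A B t₀ | t₀ ≤ s.val ∧ s.val < t} =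
      #{s ∈ A | t₀ ≤ s.val ∧ s.val < t} := by
    congr 1
    ext s
    simp only [mem_filter, mem_replacePrefix]
    grind
  rw [← countBelow_add_card_filter_Ico _ h, ← countBelow_add_card_filter_Ico A h, hband,
    countBelow_replacePrefix_of_le A B le_rfl]
  ring

lemma card_replacePrefix (A B : Finset (Fin n)) (t : ℕ) :
    #(replacePrefix A B t) + countBelow A t = countBelow B t + #A := by
  have h := countBelow_replacePrefix_of_ge A B (Nat.le_add_left t n)
  rwa [countBelow_of_le (Nat.le_add_right n t), countBelow_of_le (Nat.le_add_right n t)] at h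

lemma replacePrefix_replacePrefix (A B : Finset (Fin n)) (t : ℕ) :
    replacePrefix (replacePrefix A B t) (replacePrefix B A t) t = A := by
  ext s
  simp only [mem_replacePrefix]
  split_ifs <;> rfl

lemma prod_replacePrefix {M : Type*} [CommMonoid M] (A B : Finset (Fin n)) (t : ℕ)
    (f : Fin n → M) :
    ∏ s ∈ replacePrefix A B t, f s =
      (∏ s ∈ B with s.val < t, f s) * ∏ s ∈ A with t ≤ s.val, f s :=
  prod_union <| disjoint_filter_filter' _ _ fun _ h₁ h₂ s hs => by
    have := h₁ s hs; have := h₂ s hs; grind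

end CountBelow

section RankCount

variable {n k : ℕ}

lemma val_orderEmbOfFin_lt_iff {A : Finset (Fin n)} (h : #A = k) (r : Fin k) (t : ℕ) :
    (A.orderEmbOfFin h r : ℕ) < t ↔ (r : ℕ) < countBelow A t := by
  have hcount : countBelow A t = #{i : Fin k | (A.orderEmbOfFin h i : ℕ) < t} := by
    conv_lhs => rw [countBelow, ← image_orderEmbOfFin_univ A h]
    rw [filter_image, card_image_of_injective _ (A.orderEmbOfFin h).injective]
  rw [hcount, Fin.lt_card_filter_univ_iff_apply_of_imp]
  exact fun i j hji hi => (Fin.le_def.mp ((A.orderEmbOfFin h).monotone hji)).trans_lt hi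

lemma orderEmbOfFin_le_of_countBelow_le {A B : Finset (Fin n)} {k' : ℕ} (hA : #A = k)
    (hB : #B = k') (hcount : ∀ t, countBelow B t ≤ countBelow A t) {r : ℕ} (hrA : r < k)
    (hrB : r < k') : A.orderEmbOfFin hA ⟨r, hrA⟩ ≤ B.orderEmbOfFin hB ⟨r, hrB⟩ := by
  set b := B.orderEmbOfFin hB ⟨r, hrB⟩
  have hb : r < countBelow B (b + 1) :=
    (val_orderEmbOfFin_lt_iff hB ⟨r, hrB⟩ (b + 1)).mp (Nat.lt_add_one _)
  exact Fin.le_def.mpr <| Nat.lt_succ_iff.mp <|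
    (val_orderEmbOfFin_lt_iff hA ⟨r, hrA⟩ (b + 1)).mpr (hb.trans_le (hcount _))

end RankCount

lemma pos_iff_pos_zero_of_forall_ne_zero {d : ℕ → ℤ} (hd : ∀ t, |d (t + 1) - d t| ≤ 1)
    {n : ℕ} (hne : ∀ t ≤ n, d t ≠ 0) {t : ℕ} (ht : t ≤ n) : 0 < d t ↔ 0 < d 0 := by
  induction t with
  | zero => rfl
  | succ t ih =>
    rw [← ih (by omega)]
    have := abs_le.mp (hd t)
    have := hne t (by omega)
    have := hne (t + 1) ht
    omega

section Paths

variable {n m : ℕ}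

/-- A term of the permutation expansion of the determinant: a permutation `σ` and, for each row
`k`, a subset `S k` of the variables. `S k` is read as a lattice path starting at height `-σ k`
that goes up at time `s` iff `s ∈ S k`. -/
abbrev Config (n m : ℕ) := Equiv.Perm (Fin m) × (Fin m → Finset (Fin n))

noncomputable def weight (R : Type*) [CommSemiring R] (S : Fin m → Finset (Fin n)) :
    MvPolynomial (Fin n) R :=
  ∏ k, ∏ s ∈ S k, MvPolynomial.X s

variable {R : Type*} [CommSemiring R]

namespace Config

variable (C : Config n m)

def height (k : Fin m) (t : ℕ) : ℤ := countBelow (C.2 k) t - (C.1 k : ℕ)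

lemma height_zero (k : Fin m) : C.height k 0 = -(C.1 k : ℕ) := by
  simp [height]

lemma abs_height_sub_height_step_le_one (i j : Fin m) (t : ℕ) :
    |(C.height i (t + 1) - C.height j (t + 1)) - (C.height i t - C.height j t)| ≤ 1 := by
  have := countBelow_succ_le (C.2 i) t
  have := countBelow_succ_le (C.2 j) t
  have := countBelow_mono (C.2 i) (Nat.le_add_right t 1)
  have := countBelow_mono (C.2 j) (Nat.le_add_right t 1)
  rw [abs_le]
  simp only [height]
  omega

def EndsAt (ν : Fin m → ℤ) (C : Config n m) : Prop := ∀ k, (#(C.2 k) : ℤ) = ν k + (C.1 k : ℕ)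

instance (ν : Fin m → ℤ) : DecidablePred (EndsAt ν : Config n m → Prop) := fun _ => by
  unfold EndsAt; infer_instance

lemma height_of_endsAt {ν : Fin m → ℤ} (h : C.EndsAt ν) (k : Fin m) : C.height k n = ν k := by
  rw [height, countBelow_of_le le_rfl, h k]
  ring

def meetingPairs (t : ℕ) : Finset (Fin m × Fin m) :=
  {p | p.1 ≠ p.2 ∧ C.height p.1 t = C.height p.2 t}

def meetTimes : Finset ℕ := {t ∈ range (n + 1) | (C.meetingPairs t).Nonempty}

lemma meetTimes_eq_empty_iff :
    C.meetTimes = ∅ ↔ ∀ t ≤ n, ∀ i j, i ≠ j → C.height i t ≠ C.height j t := by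
  simp only [meetTimes, meetingPairs, filter_eq_empty_iff, mem_range, Nat.lt_succ_iff,
    Finset.Nonempty, mem_filter, mem_univ, true_and, not_exists, Prod.forall]
  grind

lemma height_lt_iff_of_meetTimes_eq_empty (h : C.meetTimes = ∅) {t : ℕ} (ht : t ≤ n)
    (i j : Fin m) : C.height i t < C.height j t ↔ C.height i 0 < C.height j 0 := by
  obtain rfl | hij := eq_or_ne i j
  · simp
  have := pos_iff_pos_zero_of_forall_ne_zero (d := fun t => C.height j t - C.height i t)
    (fun t => C.abs_height_sub_height_step_le_one j i t)
    (fun t ht => sub_ne_zero.mpr ((C.meetTimes_eq_empty_iff.mp h) t ht j i hij.symm)) ht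
  simpa only [sub_pos] using this

lemma perm_eq_one_of_meetTimes_eq_empty {ν : Fin m → ℤ} (hν : StrictAnti ν) (hC : C.EndsAt ν)
    (h : C.meetTimes = ∅) : C.1 = 1 := by
  have hmono : StrictMono C.1 := fun i j hij => by
    have hn := (C.height_lt_iff_of_meetTimes_eq_empty h le_rfl j i).mp
      (by simpa only [C.height_of_endsAt hC] using hν hij)
    simp only [height_zero, neg_lt_neg_iff, Nat.cast_lt] at hn
    exact hn
  exact Equiv.ext fun k => congrFun hmono.eq_id k

def switch (t : ℕ) (τ : Equiv.Perm (Fin m)) : Config n m :=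
  (C.1 * τ, fun k => replacePrefix (C.2 k) (C.2 (τ k)) t)

variable {C} {t : ℕ} {τ : Equiv.Perm (Fin m)}

lemma height_switch_of_le {s : ℕ} (hs : s ≤ t) (k : Fin m) :
    (C.switch t τ).height k s = C.height (τ k) s := by
  simp [height, switch, countBelow_replacePrefix_of_le _ _ hs]

lemma height_switch_of_ge (hτ : ∀ k, C.height (τ k) t = C.height k t) {s : ℕ} (hs : t ≤ s)
    (k : Fin m) : (C.switch t τ).height k s = C.height k s := by
  have := countBelow_replacePrefix_of_ge (C.2 k) (C.2 (τ k)) hs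
  have := hτ k
  simp only [height, switch, Equiv.Perm.mul_apply] at *
  omega

lemma meetingPairs_switch_of_ge (hτ : ∀ k, C.height (τ k) t = C.height k t) {s : ℕ}
    (hs : t ≤ s) : (C.switch t τ).meetingPairs s = C.meetingPairs s := by
  ext p
  simp [meetingPairs, height_switch_of_ge hτ hs]

lemma meetingPairs_switch_nonempty_iff_of_le {s : ℕ} (hs : s ≤ t) :
    ((C.switch t τ).meetingPairs s).Nonempty ↔ (C.meetingPairs s).Nonempty := by
  simp only [Finset.Nonempty, meetingPairs, mem_filter, mem_univ, true_and,
    height_switch_of_le hs, Prod.exists]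
  constructor
  · rintro ⟨i, j, hij, h⟩
    exact ⟨τ i, τ j, τ.injective.ne hij, h⟩
  · rintro ⟨i, j, hij, h⟩
    exact ⟨τ.symm i, τ.symm j, τ.symm.injective.ne hij, by simpa using h⟩

lemma meetTimes_switch (hτ : ∀ k, C.height (τ k) t = C.height k t) :
    (C.switch t τ).meetTimes = C.meetTimes := by
  ext s
  simp only [meetTimes, mem_filter]
  rcases le_total s t with hs | hs
  · rw [meetingPairs_switch_nonempty_iff_of_le hs]
  · rw [meetingPairs_switch_of_ge hτ hs]

lemma switch_switch (hτ : Function.Involutive τ) : (C.switch t τ).switch t τ = C := by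
  refine Prod.ext ?_ (funext fun k => ?_)
  · ext k
    simp [switch, hτ k]
  · simp [switch, hτ k, replacePrefix_replacePrefix]

lemma endsAt_switch (hτ : ∀ k, C.height (τ k) t = C.height k t) {ν : Fin m → ℤ}
    (h : C.EndsAt ν) : (C.switch t τ).EndsAt ν := by
  intro k
  have := card_replacePrefix (C.2 k) (C.2 (τ k)) t
  have := hτ k
  have := h k
  simp only [EndsAt, height, switch, Equiv.Perm.mul_apply] at *
  omega

lemma weight_switch : weight R (C.switch t τ).2 = weight R C.2 := by
  simp only [weight, switch, prod_replacePrefix, prod_mul_distrib]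
  rw [Equiv.prod_comp τ (fun k => ∏ s ∈ C.2 k with s.val < t, MvPolynomial.X s),
    ← prod_mul_distrib]
  refine prod_congr rfl fun k _ => ?_
  simp_rw [← not_lt]
  exact prod_filter_mul_prod_filter_not _ _ _

lemma height_swap_apply {i j : Fin m} (h : C.height i t = C.height j t) (k : Fin m) :
    C.height (Equiv.swap i j k) t = C.height k t := by
  rcases eq_or_ne k i with rfl | hi
  · simp [h]
  rcases eq_or_ne k j with rfl | hj
  · simp [h]
  rw [Equiv.swap_apply_of_ne_of_ne hi hj]

variable (C)

noncomputable def firstMeetTime (h : C.meetTimes.Nonempty) : ℕ := C.meetTimes.min' h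

lemma meetingPairs_firstMeetTime_nonempty (h : C.meetTimes.Nonempty) :
    (C.meetingPairs (C.firstMeetTime h)).Nonempty :=
  (mem_filter.mp (C.meetTimes.min'_mem h)).2

noncomputable def firstMeetPair (h : C.meetTimes.Nonempty) : Fin m × Fin m :=
  Classical.choose (C.meetingPairs_firstMeetTime_nonempty h)

lemma firstMeetPair_mem (h : C.meetTimes.Nonempty) :
    C.firstMeetPair h ∈ C.meetingPairs (C.firstMeetTime h) :=
  Classical.choose_spec (C.meetingPairs_firstMeetTime_nonempty h)

/-- The switch leaves the meeting times and the heights from the first meeting time on unchanged,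
so it does not change the choice of time and pair: this is an involution. -/
noncomputable def swapAtFirstMeeting : Config n m :=
  if h : C.meetTimes.Nonempty then
    C.switch (C.firstMeetTime h) (Equiv.swap (C.firstMeetPair h).1 (C.firstMeetPair h).2)
  else C

variable {C}

lemma firstMeetPair_fst_ne_snd (h : C.meetTimes.Nonempty) :
    (C.firstMeetPair h).1 ≠ (C.firstMeetPair h).2 :=
  (mem_filter.mp (C.firstMeetPair_mem h)).2.1

lemma height_swap_firstMeetPair_apply (h : C.meetTimes.Nonempty) (k : Fin m) :
    C.height (Equiv.swap (C.firstMeetPair h).1 (C.firstMeetPair h).2 k) (C.firstMeetTime h) =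
      C.height k (C.firstMeetTime h) :=
  height_swap_apply (mem_filter.mp (C.firstMeetPair_mem h)).2.2 k

lemma swapAtFirstMeeting_of_nonempty (h : C.meetTimes.Nonempty) : C.swapAtFirstMeeting =
    C.switch (C.firstMeetTime h) (Equiv.swap (C.firstMeetPair h).1 (C.firstMeetPair h).2) :=
  dif_pos h

lemma meetTimes_swapAtFirstMeeting (h : C.meetTimes.Nonempty) :
    C.swapAtFirstMeeting.meetTimes = C.meetTimes := by
  rw [swapAtFirstMeeting_of_nonempty h, meetTimes_switch (height_swap_firstMeetPair_apply h)]

lemma meetTimes_swapAtFirstMeeting_nonempty (h : C.meetTimes.Nonempty) :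
    C.swapAtFirstMeeting.meetTimes.Nonempty := by
  rwa [meetTimes_swapAtFirstMeeting h]

lemma firstMeetTime_swapAtFirstMeeting (h : C.meetTimes.Nonempty) :
    C.swapAtFirstMeeting.firstMeetTime (meetTimes_swapAtFirstMeeting_nonempty h) =
      C.firstMeetTime h := by
  simp only [firstMeetTime, meetTimes_swapAtFirstMeeting h]

lemma firstMeetPair_swapAtFirstMeeting (h : C.meetTimes.Nonempty) :
    C.swapAtFirstMeeting.firstMeetPair (meetTimes_swapAtFirstMeeting_nonempty h) =
      C.firstMeetPair h := by
  have hpairs : C.swapAtFirstMeeting.meetingPairs (C.firstMeetTime h) =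
      C.meetingPairs (C.firstMeetTime h) := by
    rw [swapAtFirstMeeting_of_nonempty h]
    exact meetingPairs_switch_of_ge (height_swap_firstMeetPair_apply h) le_rfl
  simp only [firstMeetPair, firstMeetTime_swapAtFirstMeeting h, hpairs]

lemma swapAtFirstMeeting_swapAtFirstMeeting (h : C.meetTimes.Nonempty) :
    C.swapAtFirstMeeting.swapAtFirstMeeting = C := by
  rw [swapAtFirstMeeting_of_nonempty (meetTimes_swapAtFirstMeeting_nonempty h),
    firstMeetTime_swapAtFirstMeeting h, firstMeetPair_swapAtFirstMeeting h]
  nth_rewrite 1 [swapAtFirstMeeting_of_nonempty h]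
  exact switch_switch (Equiv.swap_apply_self _ _)

lemma perm_swapAtFirstMeeting (h : C.meetTimes.Nonempty) :
    C.swapAtFirstMeeting.1 = C.1 * Equiv.swap (C.firstMeetPair h).1 (C.firstMeetPair h).2 := by
  rw [swapAtFirstMeeting_of_nonempty h]
  rfl

lemma sign_swapAtFirstMeeting (h : C.meetTimes.Nonempty) :
    Equiv.Perm.sign C.swapAtFirstMeeting.1 = -Equiv.Perm.sign C.1 := by
  rw [perm_swapAtFirstMeeting h, Equiv.Perm.sign_mul,
    Equiv.Perm.sign_swap (firstMeetPair_fst_ne_snd h), mul_neg_one]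

lemma swapAtFirstMeeting_ne (h : C.meetTimes.Nonempty) : C.swapAtFirstMeeting ≠ C := fun hC =>
  firstMeetPair_fst_ne_snd h <| Equiv.swap_eq_one_iff.mp <| mul_eq_left.mp <|
    (perm_swapAtFirstMeeting h).symm.trans (congrArg Prod.fst hC)

lemma endsAt_swapAtFirstMeeting (h : C.meetTimes.Nonempty) {ν : Fin m → ℤ} (hC : C.EndsAt ν) :
    C.swapAtFirstMeeting.EndsAt ν := by
  rw [swapAtFirstMeeting_of_nonempty h]
  exact endsAt_switch (height_swap_firstMeetPair_apply h) hC

lemma weight_swapAtFirstMeeting (h : C.meetTimes.Nonempty) :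
    weight R C.swapAtFirstMeeting.2 = weight R C.2 := by
  rw [swapAtFirstMeeting_of_nonempty h, weight_switch]

end Config

end Paths

section Cancellation

variable {n m : ℕ} {R : Type*} [CommRing R]

lemma sum_endsAt_meets_eq_zero (ν : Fin m → ℤ) :
    ∑ C : Config n m with C.EndsAt ν ∧ C.meetTimes.Nonempty,
      (Equiv.Perm.sign C.1 : ℤ) • weight R C.2 = 0 := by
  refine sum_involution (fun C _ => C.swapAtFirstMeeting) (fun C hC => ?_) (fun C hC _ => ?_)
    (fun C hC => ?_) (fun C hC => ?_)
  all_goals obtain ⟨hν, h⟩ := (mem_filter.mp hC).2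
  · rw [Config.sign_swapAtFirstMeeting h, Config.weight_swapAtFirstMeeting h, Units.val_neg,
      neg_smul, add_neg_cancel]
  · exact Config.swapAtFirstMeeting_ne h
  · exact mem_filter.mpr ⟨mem_univ _, Config.endsAt_swapAtFirstMeeting h hν,
      Config.meetTimes_swapAtFirstMeeting_nonempty h⟩
  · exact Config.swapAtFirstMeeting_swapAtFirstMeeting h

lemma sum_endsAt_eq_sum_meetingFree {ν : Fin m → ℤ} (hν : StrictAnti ν) :
    ∑ C : Config n m with C.EndsAt ν, (Equiv.Perm.sign C.1 : ℤ) • weight R C.2 =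
      ∑ S with Config.EndsAt ν (1, S) ∧ Config.meetTimes (1, S) = ∅, weight R S := by
  rw [← sum_filter_add_sum_filter_not _ fun C => C.meetTimes.Nonempty, filter_filter,
    sum_endsAt_meets_eq_zero, zero_add, filter_filter]
  simp_rw [not_nonempty_iff_eq_empty]
  have hone : ∀ C ∈ ({C | C.EndsAt ν ∧ C.meetTimes = ∅} : Finset (Config n m)), (1, C.2) = C :=
    fun C hC => by
      obtain ⟨hC, h⟩ := (mem_filter.mp hC).2
      rw [← C.perm_eq_one_of_meetTimes_eq_empty hν hC h]
  refine sum_nbij' Prod.snd (fun S => (1, S)) (fun C hC => ?_) (fun S hS => ?_) hone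
    (fun S _ => rfl) (fun C hC => ?_)
  · rw [← hone C hC] at hC
    simpa using hC
  · simpa using hS
  · rw [← hone C hC, Equiv.Perm.sign_one, Units.val_one, one_smul]

end Cancellation

section CountsAntitone

variable {n m : ℕ}

/-- With `S k` read as column `k` of a tableau, this says that the rows weakly increase. -/
def CountsAntitone (S : Fin m → Finset (Fin n)) : Prop :=
  ∀ t, Antitone fun k => countBelow (S k) t

lemma Config.meetTimes_one_eq_empty_iff (S : Fin m → Finset (Fin n)) :
    Config.meetTimes (1, S) = ∅ ↔ CountsAntitone S := by
  have hheight : ∀ k t, Config.height (1, S) k t = countBelow (S k) t - (k : ℕ) := fun _ _ => rfl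
  constructor
  · intro h t
    obtain _ | m := m
    · exact fun i => i.elim0
    refine Fin.antitone_iff_succ_le.mpr fun i => ?_
    have := (Config.height_lt_iff_of_meetTimes_eq_empty _ h (min_le_right t n) i.succ
      i.castSucc).mpr (by simp [Config.height_zero])
    simp only [hheight, countBelow_min, Fin.val_succ, Fin.val_castSucc] at this
    omega
  · intro h
    refine (Config.meetTimes_eq_empty_iff _).mpr fun t _ i j hij => ?_
    rw [hheight, hheight]
    rcases hij.lt_or_gt with hlt | hlt
    · have : countBelow (S j) t ≤ countBelow (S i) t := h t hlt.le
      have : (i : ℕ) < j := hlt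
      omega
    · have : countBelow (S i) t ≤ countBelow (S j) t := h t hlt.le
      have : (j : ℕ) < i := hlt
      omega

end CountsAntitone

section Determinant

open MvPolynomial

variable {n m : ℕ} {R : Type*} [CommRing R]

noncomputable def esymmInt (σ R : Type*) [CommSemiring R] [Fintype σ] (k : ℤ) :
    MvPolynomial σ R :=
  if 0 ≤ k then esymm σ R k.toNat else 0

lemma esymmInt_eq_sum (k : ℤ) :
    esymmInt (Fin n) R k = ∑ S : Finset (Fin n), if (#S : ℤ) = k then ∏ s ∈ S, X s else 0 := by
  rw [esymmInt]
  split_ifs with hk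
  · rw [esymm, powersetCard_eq_filter, powerset_univ, sum_filter]
    exact sum_congr rfl fun S _ => if_congr (by omega) rfl rfl
  · exact (sum_eq_zero fun S _ => if_neg (by omega)).symm

lemma det_esymmInt_eq_sum (ν : Fin m → ℤ) :
    (Matrix.of fun i j : Fin m => esymmInt (Fin n) R (ν i + j)).det =
      ∑ C : Config n m with C.EndsAt ν, (Equiv.Perm.sign C.1 : ℤ) • weight R C.2 := by
  rw [← Matrix.det_transpose, Matrix.det_apply, sum_filter, Fintype.sum_prod_type]
  refine sum_congr rfl fun σ _ => ?_
  simp only [Matrix.transpose_apply, Matrix.of_apply, esymmInt_eq_sum, Fintype.prod_sum,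
    Fintype.prod_ite_zero, smul_sum, Units.smul_def, smul_ite, smul_zero]
  rfl

end Determinant

section Tableau

open MvPolynomial

variable {n m L : ℕ} {lam : Fin L → ℕ}

def conjugate (lam : Fin L → ℕ) (c : ℕ) : ℕ := #{r | c < lam r}

lemma conjugate_antitone (lam : Fin L → ℕ) : Antitone (conjugate lam) :=
  fun _ _ h => card_le_card <| monotone_filter_right _ fun _ _ hr => h.trans_lt hr

lemma conjugate_le (lam : Fin L → ℕ) (c : ℕ) : conjugate lam c ≤ L :=
  (card_filter_le _ _).trans_eq (card_fin L)

lemma lt_conjugate_iff (hlam : Antitone lam) {r : Fin L} {c : ℕ} :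
    (r : ℕ) < conjugate lam c ↔ c < lam r :=
  Fin.lt_card_filter_univ_iff_apply_of_imp _ fun _ _ h hc => hc.trans_le (hlam h)

abbrev Cell (lam : Fin L → ℕ) := {x // x ∈ skewCells lam fun _ => 0}

lemma mem_skewCells_zero {p : Fin L × ℕ} : p ∈ skewCells lam (fun _ => 0) ↔ p.2 < lam p.1 := by
  simp only [skewCells, mem_filter, mem_product, mem_univ, mem_range, zero_le, true_and]
  exact and_iff_right_of_imp fun h => h.trans_le (le_sup (mem_univ _))

def cell (hlam : Antitone lam) (c : ℕ) (r : Fin (conjugate lam c)) : Cell lam :=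
  ⟨(⟨r, r.isLt.trans_le (conjugate_le lam c)⟩, c),
    mem_skewCells_zero.mpr ((lt_conjugate_iff hlam).mp r.isLt)⟩

def Cell.col (hm : ∀ r, lam r ≤ m) (x : Cell lam) : Fin m :=
  ⟨x.1.2, (mem_skewCells_zero.mp x.2).trans_le (hm _)⟩

lemma Cell.row_lt (hlam : Antitone lam) (x : Cell lam) : (x.1.1 : ℕ) < conjugate lam x.1.2 :=
  (lt_conjugate_iff hlam).mpr (mem_skewCells_zero.mp x.2)

def sigmaCellEquiv (hlam : Antitone lam) (hm : ∀ r, lam r ≤ m) :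
    (Σ c : Fin m, Fin (conjugate lam c)) ≃ Cell lam where
  toFun p := cell hlam p.1 p.2
  invFun x := ⟨x.col hm, ⟨x.1.1, x.row_lt hlam⟩⟩
  left_inv _ := rfl
  right_inv _ := rfl

def columns (hlam : Antitone lam) (T : Cell lam → Fin n) (c : Fin m) : Finset (Fin n) :=
  univ.image fun r => T (cell hlam c r)

noncomputable def ofColumns (hlam : Antitone lam) (hm : ∀ r, lam r ≤ m)
    (S : Fin m → Finset (Fin n)) (hS : ∀ c, #(S c) = conjugate lam c) (x : Cell lam) : Fin n :=
  (S (x.col hm)).orderEmbOfFin (hS _) ⟨x.1.1, x.row_lt hlam⟩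

lemma isSSYT_ofColumns (hlam : Antitone lam) (hm : ∀ r, lam r ≤ m)
    {S : Fin m → Finset (Fin n)} (hS : ∀ c, #(S c) = conjugate lam c)
    (hcount : CountsAntitone S) : IsSSYT lam (fun _ => 0) (ofColumns hlam hm S hS) := by
  constructor
  · rintro ⟨⟨r, c⟩, hx⟩ ⟨⟨r', c'⟩, hx'⟩ (rfl : r = r') (hc : c ≤ c')
    exact orderEmbOfFin_le_of_countBelow_le _ _ (fun t => hcount t hc) _ _
  · rintro ⟨⟨r, c⟩, hx⟩ ⟨⟨r', c'⟩, hx'⟩ (rfl : c = c') hr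
    exact (orderEmbOfFin _ _).strictMono hr

variable {hlam : Antitone lam} {T : Cell lam → Fin n}

lemma strictMono_column (hT : IsSSYT lam (fun _ => 0) T) (c : ℕ) :
    StrictMono fun r => T (cell hlam c r) :=
  fun _ _ h => hT.2 _ _ rfl h

lemma card_columns (hT : IsSSYT lam (fun _ => 0) T) (c : Fin m) :
    #(columns hlam T c) = conjugate lam c := by
  rw [columns, card_image_of_injective _ (strictMono_column hT c).injective, card_fin]

lemma countBelow_columns (hT : IsSSYT lam (fun _ => 0) T) (c : Fin m) (t : ℕ) :
    countBelow (columns hlam T c) t = #{r | (T (cell hlam c r) : ℕ) < t} := by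
  rw [countBelow, columns, filter_image,
    card_image_of_injective _ (strictMono_column hT c).injective]

lemma countsAntitone_columns (hT : IsSSYT lam (fun _ => 0) T) :
    CountsAntitone (columns hlam T : Fin m → Finset (Fin n)) := by
  intro t c c' hc
  simp only [countBelow_columns hT]
  have hle := conjugate_antitone lam (Fin.le_def.mp hc)
  refine card_le_card_of_injOn (fun r => Fin.castLE hle r) (fun r hr => ?_)
    (Fin.castLE_injective hle).injOn
  simp only [coe_filter, mem_univ, true_and, Set.mem_ofPred_eq] at hr ⊢
  exact (Fin.le_def.mp (hT.1 (cell hlam c (Fin.castLE hle r)) (cell hlam c' r) rfl hc)).trans_lt hr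

lemma columns_ofColumns (hm : ∀ r, lam r ≤ m) {S : Fin m → Finset (Fin n)}
    (hS : ∀ c, #(S c) = conjugate lam c) : columns hlam (ofColumns hlam hm S hS) = S :=
  funext fun c => image_orderEmbOfFin_univ (S c) (hS c)

lemma ofColumns_columns (hm : ∀ r, lam r ≤ m) (hT : IsSSYT lam (fun _ => 0) T) :
    ofColumns hlam hm (columns hlam T) (card_columns hT) = T := by
  funext x
  have hcol : ⇑((columns hlam T (x.col hm)).orderEmbOfFin (card_columns hT _)) =
      fun r => T (cell hlam (x.col hm) r) :=
    (orderEmbOfFin_unique _ (fun r => mem_image_of_mem _ (mem_univ r))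
      (strictMono_column hT _)).symm
  exact congrFun hcol ⟨x.1.1, x.row_lt hlam⟩

lemma prod_X_eq_weight_columns (hm : ∀ r, lam r ≤ m) (hT : IsSSYT lam (fun _ => 0) T) :
    ∏ x, (X (T x) : MvPolynomial (Fin n) ℤ) =
      weight ℤ (columns hlam T : Fin m → Finset (Fin n)) := by
  rw [← (sigmaCellEquiv hlam hm).prod_comp, ← univ_sigma_univ, prod_sigma, weight]
  refine prod_congr rfl fun c _ => ?_
  rw [columns, prod_image fun r _ r' _ h => (strictMono_column hT c).injective h]
  rfl

open scoped Classical in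
lemma skewSchur_eq_sum_columns (hlam : Antitone lam) (hm : ∀ r, lam r ≤ m) :
    skewSchur n lam (fun _ => 0) =
      ∑ S : Fin m → Finset (Fin n) with (∀ c : Fin m, #(S c) = conjugate lam c) ∧ CountsAntitone S,
        weight ℤ S := by
  rw [skewSchur, ← sum_filter]
  refine sum_bij' (fun T _ => columns hlam T)
    (fun S hS => ofColumns hlam hm S (mem_filter.mp hS).2.1)
    (fun T hT => ?_) (fun S hS => ?_) (fun T hT => ofColumns_columns hm (mem_filter.mp hT).2)
    (fun S _ => columns_ofColumns hm _)
    (fun T hT => prod_X_eq_weight_columns hm (mem_filter.mp hT).2)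
  · have hT := (mem_filter.mp hT).2
    exact mem_filter.mpr ⟨mem_univ _, card_columns hT, countsAntitone_columns hT⟩
  · obtain ⟨hS, hcount⟩ := (mem_filter.mp hS).2
    exact mem_filter.mpr ⟨mem_univ _, isSSYT_ofColumns hlam hm hS hcount⟩

end Tableau

open MvPolynomial in
/-- The dual Jacobi–Trudi identity: for a partition `λ` whose conjugate `λ'` has at
most `m` parts (i.e. every part of `λ` is at most `m`),
`s_λ = det (e_{λ'_i - i + j})_{i,j=1}^{m}`, where `e_0 = 1` and `e_k = 0` for
`k < 0`, and `λ'_i = #{r | λ_r ≥ i}`. -/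
theorem dual_jacobi_trudi (nv m : ℕ) {L : ℕ} (lam : Fin L → ℕ)
    (hlam : Antitone lam) (hm : ∀ i, lam i ≤ m) :
    skewSchur nv lam (fun _ => 0) =
      Matrix.det (Matrix.of fun i j : Fin m =>
        if 0 ≤ (((Finset.univ.filter fun r => (i : ℕ) < lam r).card : ℤ)
            - (i : ℤ) + (j : ℤ)) then
          esymm (Fin nv) ℤ (((Finset.univ.filter fun r => (i : ℕ) < lam r).card : ℤ)
            - (i : ℤ) + (j : ℤ)).toNat
        else 0) := by
  classical
  set ν : Fin m → ℤ := fun i => (conjugate lam i : ℤ) - i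
  have hν : StrictAnti ν := fun i j hij => by
    have := conjugate_antitone lam (Fin.le_def.mp hij.le)
    have : (i : ℕ) < j := hij
    simp only [ν]
    omega
  change _ = (Matrix.of fun i j : Fin m => esymmInt (Fin nv) ℤ (ν i + j)).det
  rw [det_esymmInt_eq_sum, sum_endsAt_eq_sum_meetingFree hν,
    skewSchur_eq_sum_columns hlam hm]
  refine sum_congr (filter_congr fun S _ => ?_) fun _ _ => rfl
  rw [Config.meetTimes_one_eq_empty_iff]
  refine and_congr_left' (forall_congr' fun c => ?_)
  simp only [ν, Equiv.Perm.one_apply]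
  omega
end

section
/- For an edgewise connected skew partition λ/μ with d diagonals, there is a bijection between outside decompositions of λ/μ and border strips with d boxes. -/
/-- Two cells of `ℤ × ℤ` are adjacent if they share an edge. -/
def CellAdj (p q : ℤ × ℤ) : Prop :=
  (p.1 = q.1 ∧ (p.2 - q.2 = 1 ∨ q.2 - p.2 = 1)) ∨
  (p.2 = q.2 ∧ (p.1 - q.1 = 1 ∨ q.1 - p.1 = 1))

/-- A finite set of cells is edgewise connected if any two of its cells are joined
by a path of edge-adjacent cells inside the set. -/
def EdgewiseConnected (S : Finset (ℤ × ℤ)) : Prop :=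
  ∀ p ∈ S, ∀ q ∈ S, Relation.ReflTransGen (fun x y => y ∈ S ∧ CellAdj x y) p q

/-- A finite set of cells contains no `2 × 2` block of boxes. -/
def No2x2 (S : Finset (ℤ × ℤ)) : Prop :=
  ∀ i j : ℤ, ¬ ((i, j) ∈ S ∧ (i, j + 1) ∈ S ∧ (i + 1, j) ∈ S ∧ (i + 1, j + 1) ∈ S)

/-- A finite set of cells is (a translate of) a skew diagram `λ/μ`: row `i`
(rows increasing downwards) consists of the columns `j` with `μ i ≤ j < λ i`,
for antitone `λ` and `μ`. -/
def IsSkewShape (S : Finset (ℤ × ℤ)) : Prop :=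
  ∃ lam mu : ℤ → ℤ, Antitone lam ∧ Antitone mu ∧
    ∀ p : ℤ × ℤ, p ∈ S ↔ mu p.1 ≤ p.2 ∧ p.2 < lam p.1

/-- A border strip: a nonempty, edgewise connected skew diagram with no `2 × 2`
block of boxes. -/
def IsBorderStrip (S : Finset (ℤ × ℤ)) : Prop :=
  S.Nonempty ∧ IsSkewShape S ∧ EdgewiseConnected S ∧ No2x2 S

/-- An outside decomposition of `S`: a partition of the cells of `S` into pairwise
disjoint border strips such that the initial (lower-left) box of each strip lies on
the left or bottom perimeter of `S`, and the terminal (upper-right) box of each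
strip lies on the right or top perimeter of `S`. -/
def IsOutsideDecomposition (S : Finset (ℤ × ℤ)) (P : Finset (Finset (ℤ × ℤ))) :
    Prop :=
  (∀ θ ∈ P, IsBorderStrip θ ∧ θ ⊆ S ∧
    (∀ p ∈ θ, ((p.1, p.2 - 1) ∉ θ ∧ (p.1 + 1, p.2) ∉ θ) →
      ((p.1, p.2 - 1) ∉ S ∨ (p.1 + 1, p.2) ∉ S)) ∧
    (∀ p ∈ θ, ((p.1, p.2 + 1) ∉ θ ∧ (p.1 - 1, p.2) ∉ θ) →
      ((p.1, p.2 + 1) ∉ S ∨ (p.1 - 1, p.2) ∉ S))) ∧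
  (∀ p ∈ S, ∃ θ ∈ P, p ∈ θ) ∧
  (∀ θ ∈ P, ∀ θ' ∈ P, θ ≠ θ' → Disjoint θ θ')

namespace OD


lemma cellAdj_symm {p q : ℤ × ℤ} (h : CellAdj p q) : CellAdj q p := by
  unfold CellAdj at *; tauto

lemma cellAdj_content {p q : ℤ × ℤ} (h : CellAdj p q) :
    q.2 - q.1 = p.2 - p.1 + 1 ∨ q.2 - q.1 = p.2 - p.1 - 1 := by
  unfold CellAdj at h; omega

lemma adj_up_or_right {p q : ℤ × ℤ} (h : CellAdj p q) (hc : q.2 - q.1 = p.2 - p.1 + 1) :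
    q = (p.1 - 1, p.2) ∨ q = (p.1, p.2 + 1) := by
  obtain ⟨a, b⟩ := q
  unfold CellAdj at h
  simp only [Prod.mk.injEq]
  omega

lemma cellAdj_up (p : ℤ × ℤ) : CellAdj p (p.1 - 1, p.2) := by unfold CellAdj; simp
lemma cellAdj_right (p : ℤ × ℤ) : CellAdj p (p.1, p.2 + 1) := by unfold CellAdj; simp

/-- Skew shape data. -/
def SkewData (S : Finset (ℤ × ℤ)) (lam mu : ℤ → ℤ) : Prop :=
  Antitone lam ∧ Antitone mu ∧ ∀ p : ℤ × ℤ, p ∈ S ↔ mu p.1 ≤ p.2 ∧ p.2 < lam p.1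

lemma SkewData.wedge {S : Finset (ℤ × ℤ)} {lam mu : ℤ → ℤ} (h : SkewData S lam mu)
    {i j i' j' a b : ℤ} (h1 : (i, j) ∈ S) (h2 : (i', j') ∈ S)
    (hia : i ≤ a) (hjb : j ≤ b) (hai : a ≤ i') (hbj : b ≤ j') : (a, b) ∈ S := by
  obtain ⟨hlam, hmu, hmem⟩ := h
  rw [hmem] at h1 h2 ⊢
  refine ⟨le_trans (le_trans (hmu hia) h1.1) hjb, lt_of_le_of_lt hbj (lt_of_lt_of_le h2.2 (hlam hai))⟩

section SkewNo2x2
variable {S : Finset (ℤ × ℤ)} {lam mu : ℤ → ℤ}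

lemma content_inj (h : SkewData S lam mu) (h2 : No2x2 S) {i j i' j' : ℤ}
    (m1 : (i, j) ∈ S) (m2 : (i', j') ∈ S) (hc : j - i = j' - i') : i = i' ∧ j = j' := by
  rcases lt_trichotomy i i' with hlt | heq | hgt
  · exfalso
    exact h2 i j ⟨m1, h.wedge m1 m2 le_rfl (by omega) (by omega) (by omega),
      h.wedge m1 m2 (by omega) le_rfl (by omega) (by omega),
      h.wedge m1 m2 (by omega) (by omega) (by omega) (by omega)⟩
  · exact ⟨heq, by omega⟩
  · exfalso
    exact h2 i' j' ⟨m2, h.wedge m2 m1 le_rfl (by omega) (by omega) (by omega),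
      h.wedge m2 m1 (by omega) le_rfl (by omega) (by omega),
      h.wedge m2 m1 (by omega) (by omega) (by omega) (by omega)⟩

/-- no L: cells (i,j), (i,j+1), (i-1,j) force a 2x2. -/
lemma no_L_up (h : SkewData S lam mu) (h2 : No2x2 S) {i j : ℤ}
    (m1 : (i, j) ∈ S) (m2 : (i, j + 1) ∈ S) (m3 : (i - 1, j) ∈ S) : False := by
  have m4 : (i - 1, j + 1) ∈ S := h.wedge m3 m2 le_rfl (by omega) (by omega) le_rfl
  have := h2 (i - 1) j
  simp only [sub_add_cancel] at this
  exact this ⟨m3, m4, m1, m2⟩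

/-- no L: cells (i,j), (i,j+1), (i+1,j+1) force a 2x2. -/
lemma no_L_dr (h : SkewData S lam mu) (h2 : No2x2 S) {i j : ℤ}
    (m1 : (i, j) ∈ S) (m2 : (i, j + 1) ∈ S) (m3 : (i + 1, j + 1) ∈ S) : False := by
  have m4 : (i + 1, j) ∈ S := h.wedge m1 m3 (by omega) le_rfl le_rfl (by omega)
  exact h2 i j ⟨m1, m2, m4, m3⟩

/-- diagonal convexity. -/
lemma diag_convex (h : SkewData S lam mu) {i j i' j' a : ℤ}
    (m1 : (i, j) ∈ S) (m2 : (i', j') ∈ S) (hc : j - i = j' - i')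
    (h1 : i ≤ a) (h2 : a ≤ i') : (a, a + (j - i)) ∈ S :=
  h.wedge m1 m2 h1 (by omega) h2 (by omega)

end SkewNo2x2

section Conn
variable {θ : Finset (ℤ × ℤ)}

lemma path_mem {p q : ℤ × ℤ}
    (h : Relation.ReflTransGen (fun x y => y ∈ θ ∧ CellAdj x y) p q) (hp : p ∈ θ) : q ∈ θ := by
  induction h with
  | refl => exact hp
  | tail _ h2 _ => exact h2.1

lemma exists_content_eq_aux {p q : ℤ × ℤ}
    (h : Relation.ReflTransGen (fun x y => y ∈ θ ∧ CellAdj x y) p q) (hp : p ∈ θ) :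
    ∀ c, p.2 - p.1 ≤ c → c ≤ q.2 - q.1 → ∃ r ∈ θ, r.2 - r.1 = c := by
  induction h with
  | refl => exact fun c h1 h2 => ⟨p, hp, by omega⟩
  | @tail b q hb hq ih =>
    intro c h1 h2
    rcases le_or_gt c (b.2 - b.1) with h3 | h3
    · exact ih c h1 h3
    · have := cellAdj_content hq.2
      exact ⟨q, hq.1, by omega⟩

lemma exists_content_eq (hconn : EdgewiseConnected θ) {p q : ℤ × ℤ} (hp : p ∈ θ) (hq : q ∈ θ)
    {c : ℤ} (h1 : p.2 - p.1 ≤ c) (h2 : c ≤ q.2 - q.1) : ∃ r ∈ θ, r.2 - r.1 = c :=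
  exists_content_eq_aux (hconn p hp q hq) hp c h1 h2

lemma exists_crossing (hconn : EdgewiseConnected θ) {p q : ℤ × ℤ} (hp : p ∈ θ) (hq : q ∈ θ)
    {c : ℤ} (h1 : p.2 - p.1 ≤ c) (h2 : c + 1 ≤ q.2 - q.1) :
    ∃ x ∈ θ, ∃ y ∈ θ, x.2 - x.1 = c ∧ y.2 - y.1 = c + 1 ∧ CellAdj x y := by
  have h := hconn p hp q hq
  clear hq
  induction h with
  | refl => omega
  | @tail b q hb hq ih =>
    rcases le_or_gt (c + 1) (b.2 - b.1) with h3 | h3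
    · exact ih h3
    · have hc := cellAdj_content hq.2
      have hbθ : b ∈ θ := path_mem hb hp
      refine ⟨b, hbθ, q, hq.1, by omega, by omega, hq.2⟩

end Conn

end OD

namespace OD

/-- custom upward induction from a base point -/
lemma int_le_ind {m : ℤ} {P : ℤ → Prop} (h0 : P m) (h1 : ∀ n, m ≤ n → P n → P (n + 1)) :
    ∀ n, m ≤ n → P n := by
  intro n hn
  obtain ⟨k, rfl⟩ : ∃ k : ℕ, n = m + k := ⟨(n - m).toNat, by omega⟩
  clear hn
  induction k with
  | zero => simpa using h0
  | succ k ih =>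
    have := h1 (m + k) (by omega) ih
    have he : m + (k + 1 : ℕ) = (m + k) + 1 := by push_cast; ring
    rwa [he]

/-- helper: antitone from single steps -/
lemma antitone_of_step {f : ℤ → ℤ} (h : ∀ i, f (i + 1) ≤ f i) : Antitone f := by
  intro a b hab
  exact int_le_ind (P := fun n => f n ≤ f a) le_rfl (fun n hn ih => le_trans (h n) ih) b hab

def IsChain (θ : Finset (ℤ × ℤ)) : Prop :=
  θ.Nonempty ∧
  (∀ p ∈ θ, ∀ q ∈ θ, p.2 - p.1 = q.2 - q.1 → p = q) ∧
  (∀ p ∈ θ, ∀ q ∈ θ, q.2 - q.1 = p.2 - p.1 + 1 → q = (p.1 - 1, p.2) ∨ q = (p.1, p.2 + 1)) ∧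
  (∀ p ∈ θ, ∀ q ∈ θ, ∀ c, p.2 - p.1 ≤ c → c ≤ q.2 - q.1 → ∃ r ∈ θ, r.2 - r.1 = c)

lemma content_inj' {θ : Finset (ℤ × ℤ)} {lam mu : ℤ → ℤ} (h : SkewData θ lam mu)
    (h2 : No2x2 θ) {p q : ℤ × ℤ} (m1 : p ∈ θ) (m2 : q ∈ θ)
    (hc : p.2 - p.1 = q.2 - q.1) : p = q := by
  obtain ⟨i, j⟩ := p; obtain ⟨i', j'⟩ := q
  have := content_inj h h2 m1 m2 (by simpa using hc)
  simp only [Prod.mk.injEq]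
  exact this

lemma isChain_of_borderStrip {θ : Finset (ℤ × ℤ)} (h : IsBorderStrip θ) : IsChain θ := by
  obtain ⟨hne, hskew, hconn, h2x2⟩ := h
  obtain ⟨lam, mu, hlam, hmu, hmem⟩ := hskew
  have hsd : SkewData θ lam mu := ⟨hlam, hmu, hmem⟩
  refine ⟨hne, fun p hp q hq hc => content_inj' hsd h2x2 hp hq hc, ?_, ?_⟩
  · intro p hp q hq hc
    obtain ⟨x, hx, y, hy, hxc, hyc, hadj⟩ :=
      exists_crossing hconn hp hq (c := p.2 - p.1) le_rfl (by omega)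
    have hxp : x = p := content_inj' hsd h2x2 hx hp hxc
    have hyq : y = q := content_inj' hsd h2x2 hy hq (by omega)
    subst hxp; subst hyq
    exact adj_up_or_right hadj hyc
  · intro p hp q hq c h1 h2
    exact exists_content_eq hconn hp hq h1 h2

lemma borderStrip_of_isChain {θ : Finset (ℤ × ℤ)} (hch : IsChain θ) : IsBorderStrip θ := by
  classical
  obtain ⟨hne, huniq, hstep, hival⟩ := hch
  set C : Finset ℤ := θ.image (fun p => p.2 - p.1) with hC
  have hCne : C.Nonempty := hne.image _
  set cmin := C.min' hCne with hcmin
  set cmax := C.max' hCne with hcmax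
  have hmemC : ∀ p ∈ θ, cmin ≤ p.2 - p.1 ∧ p.2 - p.1 ≤ cmax := by
    intro p hp
    have : p.2 - p.1 ∈ C := Finset.mem_image_of_mem _ hp
    exact ⟨Finset.min'_le _ _ this, Finset.le_max' _ _ this⟩
  obtain ⟨p0, hp0⟩ := hne
  have hex : ∀ c : ℤ, ∃ p : ℤ × ℤ, cmin ≤ c → c ≤ cmax → p ∈ θ ∧ p.2 - p.1 = c := by
    intro c
    by_cases h : cmin ≤ c ∧ c ≤ cmax
    · obtain ⟨pl, hpl⟩ := Finset.mem_image.mp (C.min'_mem hCne)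
      obtain ⟨pu, hpu⟩ := Finset.mem_image.mp (C.max'_mem hCne)
      obtain ⟨r, hr, hrc⟩ := hival pl hpl.1 pu hpu.1 c (by omega) (by omega)
      exact ⟨r, fun _ _ => ⟨hr, hrc⟩⟩
    · exact ⟨(0, 0), fun h1 h2 => absurd ⟨h1, h2⟩ h⟩
  choose t ht using hex
  have htm : ∀ c, cmin ≤ c → c ≤ cmax → t c ∈ θ := fun c h1 h2 => (ht c h1 h2).1
  have htc : ∀ c, cmin ≤ c → c ≤ cmax → (t c).2 - (t c).1 = c := fun c h1 h2 => (ht c h1 h2).2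
  have hrep : ∀ p ∈ θ, t (p.2 - p.1) = p := by
    intro p hp
    obtain ⟨h1, h2⟩ := hmemC p hp
    exact huniq _ (htm _ h1 h2) p hp (by rw [htc _ h1 h2])
  set r : ℤ → ℤ := fun c => (t c).1 with hr
  have hstep' : ∀ c, cmin ≤ c → c < cmax →
      t (c + 1) = ((t c).1 - 1, (t c).2) ∨ t (c + 1) = ((t c).1, (t c).2 + 1) := by
    intro c h1 h2
    exact hstep (t c) (htm c h1 (by omega)) (t (c + 1)) (htm _ (by omega) (by omega))
      (by rw [htc _ h1 (by omega), htc _ (by omega) (by omega)])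
  have hrstep : ∀ c, cmin ≤ c → c < cmax → r (c + 1) = r c - 1 ∨ r (c + 1) = r c := by
    intro c h1 h2
    rcases hstep' c h1 h2 with h | h <;> simp [hr, h]
  have hmono : ∀ c, cmin ≤ c → ∀ c', c ≤ c' → c' ≤ cmax → r c' ≤ r c ∧ r c - r c' ≤ c' - c := by
    intro c hc
    refine int_le_ind ?_ ?_
    · intro _; omega
    · intro n hn ih hup
      have h1 := ih (by omega)
      have h2 := hrstep n (by omega) (by omega)
      omega
  set rmin := r cmax with hrmin
  set rmax := r cmin with hrmax
  have hcc : cmin ≤ cmax := by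
    have := hmemC p0 hp0; omega
  have hrr : rmin ≤ rmax := (hmono cmin le_rfl cmax hcc le_rfl).1
  set F : ℤ → Finset ℤ := fun i => (Finset.Icc cmin cmax).filter (fun c => r c ≤ i) with hF
  set G : ℤ → Finset ℤ := fun i => (Finset.Icc cmin cmax).filter (fun c => i ≤ r c) with hG
  have memF : ∀ i c, c ∈ F i ↔ (cmin ≤ c ∧ c ≤ cmax ∧ r c ≤ i) := by
    intro i c; simp [hF, Finset.mem_filter, Finset.mem_Icc]; tauto
  have memG : ∀ i c, c ∈ G i ↔ (cmin ≤ c ∧ c ≤ cmax ∧ i ≤ r c) := by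
    intro i c; simp [hG, Finset.mem_filter, Finset.mem_Icc]; tauto
  have hFne : ∀ i, rmin ≤ i → (F i).Nonempty := by
    intro i hi
    exact ⟨cmax, (memF i cmax).mpr ⟨hcc, le_rfl, hi⟩⟩
  have hGne : ∀ i, i ≤ rmax → (G i).Nonempty := by
    intro i hi
    exact ⟨cmin, (memG i cmin).mpr ⟨le_rfl, hcc, hi⟩⟩
  set A : ℤ → ℤ := fun i => if h : (F i).Nonempty then (F i).min' h else 0 with hA
  set B : ℤ → ℤ := fun i => if h : (G i).Nonempty then (G i).max' h else 0 with hB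
  have hAmem : ∀ i, rmin ≤ i → A i ∈ F i := by
    intro i hi; rw [hA]; simp only [hFne i hi, dif_pos]; exact (F i).min'_mem _
  have hBmem : ∀ i, i ≤ rmax → B i ∈ G i := by
    intro i hi; rw [hB]; simp only [hGne i hi, dif_pos]; exact (G i).max'_mem _
  have hAle : ∀ i, rmin ≤ i → ∀ c ∈ F i, A i ≤ c := by
    intro i hi c hc; rw [hA]; simp only [hFne i hi, dif_pos]; exact (F i).min'_le _ hc
  have hBge : ∀ i, i ≤ rmax → ∀ c ∈ G i, c ≤ B i := by
    intro i hi c hc; rw [hB]; simp only [hGne i hi, dif_pos]; exact (G i).le_max' _ hc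
  have hrA : ∀ i, rmin ≤ i → i ≤ rmax → r (A i) = i := by
    intro i h1 h2
    have hm := (memF i (A i)).mp (hAmem i h1)
    by_cases hc : A i = cmin
    · rw [hc]; have := hm.2.2; rw [hc] at this; omega
    · have h3 : cmin ≤ A i - 1 := by omega
      have h4 : ¬ (A i - 1 ∈ F i) := by
        intro hmem
        have := hAle i h1 _ hmem; omega
      rw [memF] at h4
      push_neg at h4
      have h5 := h4 h3 (by omega)
      have h6 := hrstep (A i - 1) h3 (by omega)
      simp only [sub_add_cancel] at h6
      omega
  have hrB : ∀ i, rmin ≤ i → i ≤ rmax → r (B i) = i := by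
    intro i h1 h2
    have hm := (memG i (B i)).mp (hBmem i h2)
    by_cases hc : B i = cmax
    · rw [hc]; have := hm.2.2; rw [hc] at this; omega
    · have h3 : B i + 1 ≤ cmax := by omega
      have h4 : ¬ (B i + 1 ∈ G i) := by
        intro hmem
        have := hBge i h2 _ hmem; omega
      rw [memG] at h4
      push_neg at h4
      have h5 := h4 (by omega) h3
      have h6 := hrstep (B i) (by omega) (by omega)
      omega
  have hAbound : ∀ i, rmin ≤ i → cmin ≤ A i ∧ A i ≤ cmax := by
    intro i h1; have := (memF i (A i)).mp (hAmem i h1); exact ⟨this.1, this.2.1⟩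
  have hBbound : ∀ i, i ≤ rmax → cmin ≤ B i ∧ B i ≤ cmax := by
    intro i h1; have := (memG i (B i)).mp (hBmem i h1); exact ⟨this.1, this.2.1⟩
  have hAB : ∀ i, rmin ≤ i → i ≤ rmax → A i ≤ B i := by
    intro i h1 h2
    have hm := (memF i (A i)).mp (hAmem i h1)
    exact hBge i h2 _ ((memG i (A i)).mpr ⟨hm.1, hm.2.1, by rw [hrA i h1 h2]⟩)
  have hAstep : ∀ i, rmin ≤ i → i + 1 ≤ rmax → A (i + 1) < A i := by
    intro i h1 h2
    have hsub : A i ∈ F (i + 1) := by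
      rw [memF]; have := (memF i (A i)).mp (hAmem i h1); exact ⟨this.1, this.2.1, by omega⟩
    have hle : A (i + 1) ≤ A i := hAle (i + 1) (by omega) _ hsub
    rcases eq_or_lt_of_le hle with heq | hlt
    · exfalso
      have e1 := hrA i h1 (by omega)
      have e2 := hrA (i + 1) (by omega) h2
      rw [heq] at e2; omega
    · exact hlt
  have hBstep : ∀ i, rmin ≤ i → i + 1 ≤ rmax → B (i + 1) < B i := by
    intro i h1 h2
    have hsub : B (i + 1) ∈ G i := by
      rw [memG]; have := (memG (i + 1) (B (i + 1))).mp (hBmem (i + 1) h2)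
      exact ⟨this.1, this.2.1, by omega⟩
    have hle : B (i + 1) ≤ B i := hBge i (by omega) _ hsub
    rcases eq_or_lt_of_le hle with heq | hlt
    · exfalso
      have e1 := hrB i h1 (by omega)
      have e2 := hrB (i + 1) (by omega) h2
      rw [← heq] at e1; omega
    · exact hlt
  set mu : ℤ → ℤ := fun i => if i < rmin then (rmin + cmax + 1) + (rmin - i)
    else if i ≤ rmax then i + A i
    else (rmax + A rmax) - (i - rmax) with hmu
  set lam : ℤ → ℤ := fun i => if i < rmin then (rmin + cmax + 1) + (rmin - i)
    else if i ≤ rmax then i + B i + 1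
    else (rmax + A rmax) - (i - rmax) with hlam
  have hmu1 : ∀ i, i < rmin → mu i = (rmin + cmax + 1) + (rmin - i) := by
    intro i h; rw [hmu]; simp only [if_pos h]
  have hmu2 : ∀ i, rmin ≤ i → i ≤ rmax → mu i = i + A i := by
    intro i h1 h2; rw [hmu]; simp only [if_neg (by omega : ¬ i < rmin), if_pos h2]
  have hmu3 : ∀ i, rmax < i → mu i = (rmax + A rmax) - (i - rmax) := by
    intro i h; rw [hmu]
    simp only [if_neg (by omega : ¬ i < rmin), if_neg (by omega : ¬ i ≤ rmax)]
  have hlam1 : ∀ i, i < rmin → lam i = (rmin + cmax + 1) + (rmin - i) := by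
    intro i h; rw [hlam]; simp only [if_pos h]
  have hlam2 : ∀ i, rmin ≤ i → i ≤ rmax → lam i = i + B i + 1 := by
    intro i h1 h2; rw [hlam]; simp only [if_neg (by omega : ¬ i < rmin), if_pos h2]
  have hlam3 : ∀ i, rmax < i → lam i = (rmax + A rmax) - (i - rmax) := by
    intro i h; rw [hlam]
    simp only [if_neg (by omega : ¬ i < rmin), if_neg (by omega : ¬ i ≤ rmax)]
  have hmu_anti : Antitone mu := by
    apply antitone_of_step
    intro i
    rcases lt_trichotomy (i + 1) rmin with h | h | h
    · rw [hmu1 _ h, hmu1 _ (by omega)]; omega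
    · rw [hmu2 _ (by omega) (by omega), hmu1 _ (by omega)]
      have := hAbound (i + 1) (by omega)
      omega
    · rcases le_or_gt (i + 1) rmax with h2 | h2
      · rw [hmu2 _ (by omega) h2, hmu2 _ (by omega) (by omega)]
        have := hAstep i (by omega) h2
        omega
      · rcases le_or_gt i rmax with h3 | h3
        · have hie : i = rmax := by omega
          rw [hmu3 _ h2, hmu2 _ (by omega) h3, hie]
          omega
        · rw [hmu3 _ h2, hmu3 _ h3]; omega
  have hlam_anti : Antitone lam := by
    apply antitone_of_step
    intro i
    rcases lt_trichotomy (i + 1) rmin with h | h | h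
    · rw [hlam1 _ h, hlam1 _ (by omega)]; omega
    · rw [hlam2 _ (by omega) (by omega), hlam1 _ (by omega)]
      have := hBbound (i + 1) (by omega)
      omega
    · rcases le_or_gt (i + 1) rmax with h2 | h2
      · rw [hlam2 _ (by omega) h2, hlam2 _ (by omega) (by omega)]
        have := hBstep i (by omega) h2
        omega
      · rcases le_or_gt i rmax with h3 | h3
        · have hie : i = rmax := by omega
          rw [hlam3 _ h2, hlam2 _ (by omega) h3, hie]
          have := hAB rmax hrr le_rfl
          omega
        · rw [hlam3 _ h2, hlam3 _ h3]; omega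
  have hmem : ∀ p : ℤ × ℤ, p ∈ θ ↔ mu p.1 ≤ p.2 ∧ p.2 < lam p.1 := by
    intro p
    constructor
    · intro hp
      obtain ⟨hc1, hc2⟩ := hmemC p hp
      set c := p.2 - p.1 with hcdef
      have htp : t c = p := hrep p hp
      have hrow : r c = p.1 := by rw [hr]; simp only [htp]
      have hi1 : rmin ≤ p.1 := by
        have := (hmono c hc1 cmax hc2 le_rfl).1; omega
      have hi2 : p.1 ≤ rmax := by
        have := (hmono cmin le_rfl c hc1 hc2).1; omega
      have hcF : c ∈ F p.1 := (memF _ _).mpr ⟨hc1, hc2, by omega⟩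
      have hcG : c ∈ G p.1 := (memG _ _).mpr ⟨hc1, hc2, by omega⟩
      have h5 := hAle p.1 hi1 c hcF
      have h6 := hBge p.1 hi2 c hcG
      rw [hmu2 _ hi1 hi2, hlam2 _ hi1 hi2]
      omega
    · intro ⟨h1, h2⟩
      by_cases hlow : p.1 < rmin
      · rw [hmu1 _ hlow] at h1; rw [hlam1 _ hlow] at h2; omega
      by_cases hhigh : rmax < p.1
      · rw [hmu3 _ hhigh] at h1; rw [hlam3 _ hhigh] at h2; omega
      push_neg at hlow hhigh
      have h3 : p.1 ≤ rmax := hhigh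
      (
        rw [hmu2 _ (by omega) h3] at h1; rw [hlam2 _ (by omega) h3] at h2
        set c := p.2 - p.1 with hcdef
        have hi1 : rmin ≤ p.1 := by omega
        have hAc : A p.1 ≤ c := by omega
        have hcB : c ≤ B p.1 := by omega
        have hbA := hAbound p.1 hi1
        have hbB := hBbound p.1 h3
        have hrc : r c = p.1 := by
          have m1 := (hmono (A p.1) (by omega) c hAc (by omega)).1
          have m2 := (hmono c (by omega) (B p.1) hcB (by omega)).1
          rw [hrA _ hi1 h3] at m1
          rw [hrB _ hi1 h3] at m2
          omega
        have htm' := htm c (by omega) (by omega)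
        have htc' := htc c (by omega) (by omega)
        have : t c = p := by
          have : (t c).1 = p.1 := hrc
          have h2 : (t c).2 = p.2 := by omega
          exact Prod.ext this h2
        rw [← this]
        exact htm')
  have hpath : ∀ c, cmin ≤ c → ∀ c', c ≤ c' → c' ≤ cmax →
      Relation.ReflTransGen (fun x y => y ∈ θ ∧ CellAdj x y) (t c) (t c') ∧
      Relation.ReflTransGen (fun x y => y ∈ θ ∧ CellAdj x y) (t c') (t c) := by
    intro c hc
    refine int_le_ind ?_ ?_
    · intro _; exact ⟨Relation.ReflTransGen.refl, Relation.ReflTransGen.refl⟩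
    · intro n hn ih hup
      obtain ⟨ih1, ih2⟩ := ih (by omega)
      have hadj : CellAdj (t n) (t (n + 1)) := by
        rcases hstep' n (by omega) (by omega) with h | h
        · rw [h]; exact cellAdj_up _
        · rw [h]; exact cellAdj_right _
      have hm1 : t (n + 1) ∈ θ := htm _ (by omega) (by omega)
      have hm0 : t n ∈ θ := htm _ (by omega) (by omega)
      exact ⟨ih1.tail ⟨hm1, hadj⟩, Relation.ReflTransGen.head ⟨hm0, cellAdj_symm hadj⟩ ih2⟩
  have hconn : EdgewiseConnected θ := by
    intro p hp q hq
    obtain ⟨hc1, hc2⟩ := hmemC p hp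
    obtain ⟨hd1, hd2⟩ := hmemC q hq
    rcases le_total (p.2 - p.1) (q.2 - q.1) with h | h
    · have := (hpath (p.2 - p.1) hc1 (q.2 - q.1) h hd2).1
      rwa [hrep p hp, hrep q hq] at this
    · have := (hpath (q.2 - q.1) hd1 (p.2 - p.1) h hc2).2
      rwa [hrep p hp, hrep q hq] at this
  have h2x2 : No2x2 θ := by
    intro i j ⟨m1, m2, m3, m4⟩
    have := huniq _ m1 _ m4 (by show j - i = (j + 1) - (i + 1); ring)
    simp only [Prod.mk.injEq] at this
    omega
  exact ⟨⟨p0, hp0⟩, ⟨lam, mu, hlam_anti, hmu_anti, hmem⟩, hconn, h2x2⟩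

end OD

namespace OD
open scoped Classical

variable {S : Finset (ℤ × ℤ)} {ε : ℤ → Bool}

/-- successor cell in direction ε -/
def succC (ε : ℤ → Bool) (p : ℤ × ℤ) : ℤ × ℤ :=
  if ε (p.2 - p.1) then (p.1 - 1, p.2) else (p.1, p.2 + 1)

def predC (ε : ℤ → Bool) (p : ℤ × ℤ) : ℤ × ℤ :=
  if ε (p.2 - p.1 - 1) then (p.1 + 1, p.2) else (p.1, p.2 - 1)

lemma succC_content (ε : ℤ → Bool) (p : ℤ × ℤ) :
    (succC ε p).2 - (succC ε p).1 = p.2 - p.1 + 1 := by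
  unfold succC
  by_cases h : ε (p.2 - p.1)
  · rw [if_pos h]; simp; ring
  · rw [if_neg h]; simp; ring

lemma succC_or (ε : ℤ → Bool) (p : ℤ × ℤ) :
    succC ε p = (p.1 - 1, p.2) ∨ succC ε p = (p.1, p.2 + 1) := by
  unfold succC; split <;> simp

lemma succC_inj {p q : ℤ × ℤ} (h : succC ε p = succC ε q) : p = q := by
  have hc : p.2 - p.1 = q.2 - q.1 := by
    have h1 := succC_content ε p
    have h2 := succC_content ε q
    rw [h] at h1; omega
  rw [succC, succC, hc] at h
  by_cases hb : ε (q.2 - q.1)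
  · rw [if_pos hb, if_pos hb] at h
    simp only [Prod.mk.injEq] at h
    exact Prod.ext (by omega) (by omega)
  · rw [if_neg hb, if_neg hb] at h
    simp only [Prod.mk.injEq] at h
    exact Prod.ext (by omega) (by omega)

lemma cellAdj_succC (ε : ℤ → Bool) (p : ℤ × ℤ) : CellAdj p (succC ε p) := by
  rcases succC_or ε p with h | h <;> rw [h]
  · exact cellAdj_up p
  · exact cellAdj_right p

lemma succC_predC (ε : ℤ → Bool) (p : ℤ × ℤ) : succC ε (predC ε p) = p := by
  unfold succC predC
  by_cases h : ε (p.2 - p.1 - 1)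
  · rw [if_pos h]
    have : ((p.1 + 1, p.2) : ℤ × ℤ).2 - (p.1 + 1, p.2).1 = p.2 - p.1 - 1 := by simp; ring
    rw [this, if_pos h]; simp
  · rw [if_neg h]
    have : ((p.1, p.2 - 1) : ℤ × ℤ).2 - (p.1, p.2 - 1).1 = p.2 - p.1 - 1 := by simp; ring
    rw [this, if_neg h]
    simp

/-- one step of a strip inside S -/
def Rs (S : Finset (ℤ × ℤ)) (ε : ℤ → Bool) (p q : ℤ × ℤ) : Prop :=
  p ∈ S ∧ q ∈ S ∧ q = succC ε p

def Rel (S : Finset (ℤ × ℤ)) (ε : ℤ → Bool) : ℤ × ℤ → ℤ × ℤ → Prop :=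
  Relation.ReflTransGen (Rs S ε)

def Conn (S : Finset (ℤ × ℤ)) (ε : ℤ → Bool) (p q : ℤ × ℤ) : Prop :=
  Rel S ε p q ∨ Rel S ε q p

noncomputable def orbit (S : Finset (ℤ × ℤ)) (ε : ℤ → Bool) (p : ℤ × ℤ) : Finset (ℤ × ℤ) :=
  S.filter (Conn S ε p)

noncomputable def decomp (S : Finset (ℤ × ℤ)) (ε : ℤ → Bool) : Finset (Finset (ℤ × ℤ)) :=
  S.image (orbit S ε)

lemma rel_content {p q : ℤ × ℤ} (h : Rel S ε p q) : p.2 - p.1 ≤ q.2 - q.1 := by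
  induction h with
  | refl => exact le_rfl
  | @tail b c hb hc ih =>
    have := succC_content ε b
    rw [← hc.2.2] at this
    omega

lemma rel_content_eq {p q : ℤ × ℤ} (h : Rel S ε p q) (hc : p.2 - p.1 = q.2 - q.1) : p = q := by
  rcases (Relation.ReflTransGen.cases_tail h) with h1 | ⟨b, h1, h2⟩
  · exact h1.symm
  · exfalso
    have hb := rel_content h1
    have := succC_content ε b
    rw [← h2.2.2] at this
    omega

lemma rel_mem_right {p q : ℤ × ℤ} (h : Rel S ε p q) (hp : p ∈ S) : q ∈ S := by
  induction h with
  | refl => exact hp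
  | tail _ h2 _ => exact h2.2.1

lemma rs_det {p q q' : ℤ × ℤ} (h1 : Rs S ε p q) (h2 : Rs S ε p q') : q = q' := by
  rw [h1.2.2, h2.2.2]

lemma rs_inj {p p' q : ℤ × ℤ} (h1 : Rs S ε p q) (h2 : Rs S ε p' q) : p = p' :=
  succC_inj (h1.2.2 ▸ h2.2.2 ▸ rfl : succC ε p = succC ε p')

/-- forward comparability -/
lemma rel_comp_fwd {a b c : ℤ × ℤ} (h1 : Rel S ε a b) (h2 : Rel S ε a c) :
    Rel S ε b c ∨ Rel S ε c b := by
  induction h1 using Relation.ReflTransGen.head_induction_on with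
  | refl => exact Or.inl h2
  | @head a a' ha hab ih =>
    rcases Relation.ReflTransGen.cases_head h2 with rfl | ⟨c', hc', hcc⟩
    · exact Or.inr (Relation.ReflTransGen.head ha hab)
    · have : a' = c' := rs_det ha hc'
      exact ih (this ▸ hcc)

/-- backward comparability -/
lemma rel_comp_bwd {a b c : ℤ × ℤ} (h1 : Rel S ε b a) (h2 : Rel S ε c a) :
    Rel S ε b c ∨ Rel S ε c b := by
  induction h1 with
  | refl => exact Or.inr h2
  | @tail m a hbm hma ih =>
    rcases Relation.ReflTransGen.cases_tail h2 with rfl | ⟨m', hcm', hm'a⟩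
    · exact Or.inl (hbm.tail hma)
    · have : m' = m := rs_inj hm'a hma
      exact ih (this ▸ hcm')

lemma conn_refl (p : ℤ × ℤ) : Conn S ε p p := Or.inl Relation.ReflTransGen.refl

lemma conn_symm {p q : ℤ × ℤ} (h : Conn S ε p q) : Conn S ε q p := h.symm

lemma conn_trans {p q r : ℤ × ℤ} (h1 : Conn S ε p q) (h2 : Conn S ε q r) : Conn S ε p r := by
  rcases h1 with h1 | h1 <;> rcases h2 with h2 | h2
  · exact Or.inl (h1.trans h2)
  · exact rel_comp_bwd h1 h2
  · exact rel_comp_fwd h1 h2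
  · exact Or.inr (h2.trans h1)

lemma mem_orbit_iff {p q : ℤ × ℤ} : q ∈ orbit S ε p ↔ q ∈ S ∧ Conn S ε p q := by
  unfold orbit; simp [Finset.mem_filter]

lemma orbit_subset (p : ℤ × ℤ) : orbit S ε p ⊆ S := Finset.filter_subset _ _

lemma mem_orbit_self {p : ℤ × ℤ} (hp : p ∈ S) : p ∈ orbit S ε p :=
  mem_orbit_iff.mpr ⟨hp, conn_refl p⟩

lemma orbit_eq_of_conn {p q : ℤ × ℤ} (h : Conn S ε p q) : orbit S ε p = orbit S ε q := by
  ext x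
  rw [mem_orbit_iff, mem_orbit_iff]
  exact ⟨fun ⟨hx, hc⟩ => ⟨hx, conn_trans (conn_symm h) hc⟩,
         fun ⟨hx, hc⟩ => ⟨hx, conn_trans h hc⟩⟩

lemma orbit_eq_of_mem {p q : ℤ × ℤ} (h : q ∈ orbit S ε p) : orbit S ε p = orbit S ε q :=
  orbit_eq_of_conn (mem_orbit_iff.mp h).2

/-- two cells in one orbit with equal content are equal -/
lemma orbit_content_inj {p q q' : ℤ × ℤ} (hq : q ∈ orbit S ε p) (hq' : q' ∈ orbit S ε p)
    (hc : q.2 - q.1 = q'.2 - q'.1) : q = q' := by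
  rw [mem_orbit_iff] at hq hq'
  have hcon : Conn S ε q q' := conn_trans (conn_symm hq.2) hq'.2
  rcases hcon with h | h
  · exact rel_content_eq h hc
  · exact (rel_content_eq h hc.symm).symm

/-- consecutive-content cells in an orbit form a succ step -/
lemma orbit_consec {p q q' : ℤ × ℤ} (hq : q ∈ orbit S ε p) (hq' : q' ∈ orbit S ε p)
    (hc : q'.2 - q'.1 = q.2 - q.1 + 1) : q' = succC ε q := by
  rw [mem_orbit_iff] at hq hq'
  have hcon : Conn S ε q q' := conn_trans (conn_symm hq.2) hq'.2
  have hrel : Rel S ε q q' := by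
    rcases hcon with h | h
    · exact h
    · have := rel_content h; omega
  rcases Relation.ReflTransGen.cases_head hrel with rfl | ⟨x, hx, hxq⟩
  · omega
  · have hcx : x.2 - x.1 = q'.2 - q'.1 := by
      have h1 := succC_content ε q
      rw [← hx.2.2] at h1
      omega
    have : x = q' := rel_content_eq hxq hcx
    rw [← this, hx.2.2]

lemma rel_exists_content {q q' : ℤ × ℤ} (h : Rel S ε q q') :
    ∀ c, q.2 - q.1 ≤ c → c ≤ q'.2 - q'.1 → ∃ r, Rel S ε q r ∧ Rel S ε r q' ∧ r.2 - r.1 = c := by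
  induction h with
  | refl => exact fun c h1 h2 => ⟨q, Relation.ReflTransGen.refl, Relation.ReflTransGen.refl, by omega⟩
  | @tail b q' hb hq ih =>
    intro c h1 h2
    have hbc := succC_content ε b
    rw [← hq.2.2] at hbc
    rcases le_or_gt c (b.2 - b.1) with h3 | h3
    · obtain ⟨r, hr1, hr2, hr3⟩ := ih c h1 h3
      exact ⟨r, hr1, hr2.tail hq, hr3⟩
    · exact ⟨q', hb.tail hq, Relation.ReflTransGen.refl, by omega⟩

/-- orbits are chains -/
lemma orbit_isChain {p : ℤ × ℤ} (hp : p ∈ S) : IsChain (orbit S ε p) := by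
  refine ⟨⟨p, mem_orbit_self hp⟩, ?_, ?_, ?_⟩
  · intro q hq q' hq' hc
    exact orbit_content_inj hq hq' hc
  · intro q hq q' hq' hc
    have := orbit_consec hq hq' hc
    rw [this]
    exact succC_or ε q
  · intro q hq q' hq' c h1 h2
    have hqS := (mem_orbit_iff.mp hq)
    have hq'S := (mem_orbit_iff.mp hq')
    have hcon : Conn S ε q q' := conn_trans (conn_symm hqS.2) hq'S.2
    have hrel : Rel S ε q q' := by
      rcases hcon with h | h
      · exact h
      · have hcc := rel_content h
        have heq : q' = q := rel_content_eq h (by omega)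
        rw [heq] at h ⊢
        exact Relation.ReflTransGen.refl
    obtain ⟨r, hr1, hr2, hr3⟩ := rel_exists_content hrel c h1 h2
    exact ⟨r, mem_orbit_iff.mpr ⟨rel_mem_right hr1 hqS.1, conn_trans hqS.2 (Or.inl hr1)⟩, hr3⟩

lemma rel_path_fwd {x y : ℤ × ℤ} {p : ℤ × ℤ} (h : Rel S ε x y) (hx : x ∈ orbit S ε p) :
    Relation.ReflTransGen (fun a b => b ∈ orbit S ε p ∧ CellAdj a b) x y := by
  induction h with
  | refl => exact Relation.ReflTransGen.refl
  | @tail b y hb hy ih =>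
    have hbo : b ∈ orbit S ε p := by
      rw [mem_orbit_iff] at hx ⊢
      exact ⟨rel_mem_right hb hx.1, conn_trans hx.2 (Or.inl hb)⟩
    have hyo : y ∈ orbit S ε p := by
      rw [mem_orbit_iff] at hbo ⊢
      exact ⟨hy.2.1, conn_trans hbo.2 (Or.inl (Relation.ReflTransGen.single hy))⟩
    exact ih.tail ⟨hyo, hy.2.2 ▸ cellAdj_succC ε b⟩

lemma rel_path_bwd {x y : ℤ × ℤ} {p : ℤ × ℤ} (h : Rel S ε x y) (hx : x ∈ orbit S ε p) :
    Relation.ReflTransGen (fun a b => b ∈ orbit S ε p ∧ CellAdj a b) y x := by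
  induction h with
  | refl => exact Relation.ReflTransGen.refl
  | @tail b y hb hy ih =>
    have hbo : b ∈ orbit S ε p := by
      rw [mem_orbit_iff] at hx ⊢
      exact ⟨rel_mem_right hb hx.1, conn_trans hx.2 (Or.inl hb)⟩
    exact Relation.ReflTransGen.head ⟨hbo, cellAdj_symm (hy.2.2 ▸ cellAdj_succC ε b)⟩ ih

lemma orbit_conn {p : ℤ × ℤ} : EdgewiseConnected (orbit S ε p) := by
  intro x hx y hy
  have hcon : Conn S ε x y :=
    conn_trans (conn_symm (mem_orbit_iff.mp hx).2) (mem_orbit_iff.mp hy).2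
  rcases hcon with h | h
  · exact rel_path_fwd h hx
  · exact rel_path_bwd h hy

lemma orbit_borderStrip {p : ℤ × ℤ} (hp : p ∈ S) : IsBorderStrip (orbit S ε p) :=
  borderStrip_of_isChain (orbit_isChain hp)

end OD

namespace OD
open scoped Classical

variable {S : Finset (ℤ × ℤ)} {ε : ℤ → Bool}

lemma predC_or (ε : ℤ → Bool) (p : ℤ × ℤ) :
    predC ε p = (p.1 + 1, p.2) ∨ predC ε p = (p.1, p.2 - 1) := by
  unfold predC; split <;> simp

lemma decomp_isOutsideDecomposition : IsOutsideDecomposition S (decomp S ε) := by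
  refine ⟨?_, ?_, ?_⟩
  · intro θ hθ
    obtain ⟨p, hp, rfl⟩ := Finset.mem_image.mp hθ
    refine ⟨orbit_borderStrip hp, orbit_subset p, ?_, ?_⟩
    · intro q hq hni
      by_contra hcon
      push_neg at hcon
      obtain ⟨h1, h2⟩ := hcon
      have hqS : q ∈ S := orbit_subset p hq
      have hpred : predC ε q ∈ S := by
        rcases predC_or ε q with h | h <;> rw [h]
        · exact h2
        · exact h1
      have hrs : Rs S ε (predC ε q) q := ⟨hpred, hqS, (succC_predC ε q).symm⟩
      have hmem : predC ε q ∈ orbit S ε p := by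
        rw [mem_orbit_iff]
        exact ⟨hpred, conn_trans (mem_orbit_iff.mp hq).2
          (Or.inr (Relation.ReflTransGen.single hrs))⟩
      rcases predC_or ε q with h | h <;> rw [h] at hmem
      · exact hni.2 hmem
      · exact hni.1 hmem
    · intro q hq hni
      by_contra hcon
      push_neg at hcon
      obtain ⟨h1, h2⟩ := hcon
      have hqS : q ∈ S := orbit_subset p hq
      have hsucc : succC ε q ∈ S := by
        rcases succC_or ε q with h | h <;> rw [h]
        · exact h2
        · exact h1
      have hrs : Rs S ε q (succC ε q) := ⟨hqS, hsucc, rfl⟩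
      have hmem : succC ε q ∈ orbit S ε p := by
        rw [mem_orbit_iff]
        exact ⟨hsucc, conn_trans (mem_orbit_iff.mp hq).2
          (Or.inl (Relation.ReflTransGen.single hrs))⟩
      rcases succC_or ε q with h | h <;> rw [h] at hmem
      · exact hni.2 hmem
      · exact hni.1 hmem
  · intro q hq
    exact ⟨orbit S ε q, Finset.mem_image_of_mem _ hq, mem_orbit_self hq⟩
  · intro θ hθ θ' hθ' hne
    obtain ⟨p, hp, rfl⟩ := Finset.mem_image.mp hθ
    obtain ⟨p', hp', rfl⟩ := Finset.mem_image.mp hθ'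
    rw [Finset.disjoint_left]
    intro x hx hx'
    exact hne ((orbit_eq_of_mem hx).trans (orbit_eq_of_mem hx').symm)

/-- in `decomp S ε`, an up-crossing at content c happens iff ε c is true and a vertical
adjacency exists in S at content c -/
lemma decomp_cross_up_iff {c : ℤ} :
    (∃ q ∈ S, q.2 - q.1 = c ∧ (q.1 - 1, q.2) ∈ orbit S ε q) ↔
    (ε c = true ∧ ∃ q ∈ S, q.2 - q.1 = c ∧ (q.1 - 1, q.2) ∈ S) := by
  constructor
  · rintro ⟨q, hq, hc, hup⟩
    have hupS : (q.1 - 1, q.2) ∈ S := orbit_subset q hup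
    have hcons : ((q.1 - 1, q.2) : ℤ × ℤ) = succC ε q := by
      apply orbit_consec (mem_orbit_self hq) hup
      simp; ring
    have : ε c = true := by
      by_contra hb
      simp only [Bool.not_eq_true] at hb
      rw [succC, hc, hb] at hcons
      rw [if_neg (by simp)] at hcons
      simp only [Prod.mk.injEq] at hcons
      omega
    exact ⟨this, q, hq, hc, hupS⟩
  · rintro ⟨hb, q, hq, hc, hup⟩
    have hsucc : succC ε q = (q.1 - 1, q.2) := by rw [succC, hc, hb]; simp
    have hrs : Rs S ε q (q.1 - 1, q.2) := ⟨hq, hup, hsucc.symm⟩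
    exact ⟨q, hq, hc, mem_orbit_iff.mpr ⟨hup, Or.inl (Relation.ReflTransGen.single hrs)⟩⟩

lemma decomp_cross_right_iff {c : ℤ} :
    (∃ q ∈ S, q.2 - q.1 = c ∧ (q.1, q.2 + 1) ∈ orbit S ε q) ↔
    (ε c = false ∧ ∃ q ∈ S, q.2 - q.1 = c ∧ (q.1, q.2 + 1) ∈ S) := by
  constructor
  · rintro ⟨q, hq, hc, hrt⟩
    have hrtS : (q.1, q.2 + 1) ∈ S := orbit_subset q hrt
    have hcons : ((q.1, q.2 + 1) : ℤ × ℤ) = succC ε q := by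
      apply orbit_consec (mem_orbit_self hq) hrt
      simp; ring
    have : ε c = false := by
      by_contra hb
      simp only [Bool.not_eq_false] at hb
      rw [succC, hc, hb] at hcons
      rw [if_pos rfl] at hcons
      simp only [Prod.mk.injEq] at hcons
      omega
    exact ⟨this, q, hq, hc, hrtS⟩
  · rintro ⟨hb, q, hq, hc, hrt⟩
    have hsucc : succC ε q = (q.1, q.2 + 1) := by rw [succC, hc, hb]; simp
    have hrs : Rs S ε q (q.1, q.2 + 1) := ⟨hq, hrt, hsucc.symm⟩
    exact ⟨q, hq, hc, mem_orbit_iff.mpr ⟨hrt, Or.inl (Relation.ReflTransGen.single hrs)⟩⟩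

end OD

namespace OD
open scoped Classical

variable {S : Finset (ℤ × ℤ)} {P : Finset (Finset (ℤ × ℤ))} {lam mu : ℤ → ℤ}

lemma mem_congr' {A : Finset (ℤ × ℤ)} {a b x y : ℤ} (h : (a, b) ∈ A) (h1 : a = x)
    (h2 : b = y) : (x, y) ∈ A := by rw [← h1, ← h2]; exact h

lemma notmem_congr' {A : Finset (ℤ × ℤ)} {a b x y : ℤ} (h : (a, b) ∉ A) (h1 : a = x)
    (h2 : b = y) : (x, y) ∉ A := by rw [← h1, ← h2]; exact h

lemma int_ge_ind {m : ℤ} {Q : ℤ → Prop} (h0 : Q m) (h1 : ∀ n, n ≤ m → Q n → Q (n - 1)) :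
    ∀ n, n ≤ m → Q n := by
  intro n hn
  have key : ∀ k : ℕ, Q (m - k) := by
    intro k
    induction k with
    | zero => simpa using h0
    | succ k ih =>
      have := h1 (m - k) (by omega) ih
      have he : m - (k + 1 : ℕ) = (m - k) - 1 := by push_cast; ring
      rwa [he]
  have : n = m - ((m - n).toNat : ℤ) := by omega
  rw [this]
  exact key _

lemma diag_convex' (h : SkewData S lam mu) {c i1 i2 a : ℤ} (m1 : (i1, i1 + c) ∈ S)
    (m2 : (i2, i2 + c) ∈ S) (h1 : i1 ≤ a) (h2 : a ≤ i2) : (a, a + c) ∈ S :=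
  h.wedge m1 m2 h1 (by omega) h2 (by omega)

lemma bs_content_inj {θ : Finset (ℤ × ℤ)} (h : IsBorderStrip θ) {p q : ℤ × ℤ}
    (hp : p ∈ θ) (hq : q ∈ θ) (hc : p.2 - p.1 = q.2 - q.1) : p = q := by
  obtain ⟨_, ⟨l, m, hl, hm, hmem⟩, _, h2⟩ := h
  exact content_inj' ⟨hl, hm, hmem⟩ h2 hp hq hc

lemma bs_no_L_up {θ : Finset (ℤ × ℤ)} (h : IsBorderStrip θ) {i j : ℤ}
    (m1 : (i, j) ∈ θ) (m2 : (i, j + 1) ∈ θ) (m3 : (i - 1, j) ∈ θ) : False := by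
  obtain ⟨_, ⟨l, m, hl, hm, hmem⟩, _, h2⟩ := h
  exact no_L_up ⟨hl, hm, hmem⟩ h2 m1 m2 m3

lemma bs_no_L_dr {θ : Finset (ℤ × ℤ)} (h : IsBorderStrip θ) {i j : ℤ}
    (m1 : (i, j) ∈ θ) (m2 : (i, j + 1) ∈ θ) (m3 : (i + 1, j + 1) ∈ θ) : False := by
  obtain ⟨_, ⟨l, m, hl, hm, hmem⟩, _, h2⟩ := h
  exact no_L_dr ⟨hl, hm, hmem⟩ h2 m1 m2 m3

/-- vertical crossing at content c, row i -/
def VC (P : Finset (Finset (ℤ × ℤ))) (c i : ℤ) : Prop :=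
  ∃ θ ∈ P, (i, i + c) ∈ θ ∧ (i - 1, i + c) ∈ θ

/-- horizontal crossing at content c, row i -/
def HC (P : Finset (Finset (ℤ × ℤ))) (c i : ℤ) : Prop :=
  ∃ θ ∈ P, (i, i + c) ∈ θ ∧ (i, i + c + 1) ∈ θ

section OutsideDecomp
variable (hP : IsOutsideDecomposition S P)

include hP

lemma strip_unique {θ θ' : Finset (ℤ × ℤ)} {p : ℤ × ℤ} (hθ : θ ∈ P) (hθ' : θ' ∈ P)
    (hp : p ∈ θ) (hp' : p ∈ θ') : θ = θ' := by
  by_contra hne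
  exact (Finset.disjoint_left.mp (hP.2.2 θ hθ θ' hθ' hne) hp) hp'

lemma VC_memS {c i : ℤ} (h : VC P c i) : (i, i + c) ∈ S ∧ (i - 1, i + c) ∈ S := by
  obtain ⟨θ, hθ, h1, h2⟩ := h
  exact ⟨(hP.1 θ hθ).2.1 h1, (hP.1 θ hθ).2.1 h2⟩

lemma HC_memS {c i : ℤ} (h : HC P c i) : (i, i + c) ∈ S ∧ (i, i + c + 1) ∈ S := by
  obtain ⟨θ, hθ, h1, h2⟩ := h
  exact ⟨(hP.1 θ hθ).2.1 h1, (hP.1 θ hθ).2.1 h2⟩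

/-- M1 : no vertical and horizontal crossing at the same cell -/
lemma not_VC_HC_same {c i : ℤ} (hv : VC P c i) (hh : HC P c i) : False := by
  obtain ⟨θ, hθ, h1, h2⟩ := hv
  obtain ⟨θ', hθ', h1', h2'⟩ := hh
  have heq : θ = θ' := strip_unique hP hθ hθ' h1 h1'
  subst heq
  have := bs_content_inj (hP.1 θ hθ).1 h2 h2' (by show (i+c) - (i-1) = (i+c+1) - i; ring)
  simp only [Prod.mk.injEq] at this
  omega

/-- M2 : upward propagation of a vertical crossing along a diagonal -/
lemma VC_propagate_up {c i : ℤ} (hv : VC P c i) (hx : (i + 1, i + 1 + c) ∈ S)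
    (hm : (i, i + c + 1) ∈ S) : VC P c (i + 1) := by
  obtain ⟨θ, hθ, h1, h2⟩ := hv
  obtain ⟨θm, hθm, hmm⟩ := hP.2.1 (i, i + c + 1) hm
  have hxm : (i, i + c) ∉ θm := by
    intro hmem
    have : θm = θ := strip_unique hP hθm hθ hmem h1
    rw [this] at hmm
    exact bs_no_L_up (hP.1 θ hθ).1 h1 hmm h2
  by_cases hnext : (i + 1, i + c + 1) ∈ θm
  · refine ⟨θm, hθm, mem_congr' hnext rfl (by ring), mem_congr' hmm (by ring) (by ring)⟩
  · exfalso
    have hinit := (hP.1 θm hθm).2.2.1 (i, i + c + 1) hmm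
    simp only at hinit
    have := hinit ⟨notmem_congr' hxm rfl (by ring), hnext⟩
    rcases this with h | h
    · exact h (mem_congr' ((hP.1 θ hθ).2.1 h1) rfl (by ring))
    · exact h (mem_congr' hx rfl (by ring))

/-- M3 : downward propagation of a vertical crossing along a diagonal -/
lemma VC_propagate_down {c i : ℤ} (hv : VC P c i) (hq : (i - 1, i - 1 + c) ∈ S)
    (hq2 : (i - 2, i - 1 + c) ∈ S) : VC P c (i - 1) := by
  obtain ⟨θ, hθ, h1, h2⟩ := hv
  obtain ⟨θq, hθq, hqq⟩ := hP.2.1 (i - 1, i - 1 + c) hq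
  have hrq : (i - 1, i + c) ∉ θq := by
    intro hmem
    have : θq = θ := strip_unique hP hθq hθ hmem h2
    rw [this] at hqq hmem
    exact bs_no_L_dr (hP.1 θ hθ).1 (mem_congr' hqq rfl rfl)
      (mem_congr' hmem rfl (by ring)) (mem_congr' h1 (by ring) (by ring))
  by_cases hup : (i - 2, i - 1 + c) ∈ θq
  · exact ⟨θq, hθq, hqq, mem_congr' hup (by ring) (by ring)⟩
  · exfalso
    have hterm := (hP.1 θq hθq).2.2.2 (i - 1, i - 1 + c) hqq
    simp only at hterm
    have := hterm ⟨notmem_congr' hrq rfl (by ring), notmem_congr' hup (by ring) rfl⟩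
    rcases this with h | h
    · exact h (mem_congr' ((hP.1 θ hθ).2.1 h2) rfl (by ring))
    · exact (notmem_congr' h (by ring) rfl) hq2

/-- the mixed-crossing impossibility -/
lemma not_VC_and_HC (hsd : SkewData S lam mu) {c i i' : ℤ} (hv : VC P c i)
    (hh : HC P c i') : False := by
  have hxi : (i, i + c) ∈ S := (VC_memS hP hv).1
  have hyi : (i - 1, i + c) ∈ S := (VC_memS hP hv).2
  have hxi' : (i', i' + c) ∈ S := (HC_memS hP hh).1
  have hyi' : (i', i' + c + 1) ∈ S := (HC_memS hP hh).2
  rcases le_or_gt i i' with hle | hlt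
  · -- propagate up from i to i'
    have key : ∀ k, i ≤ k → k ≤ i' → VC P c k := by
      have base : VC P c i := hv
      have step : ∀ n, i ≤ n → (n ≤ i' → VC P c n) → ((n + 1) ≤ i' → VC P c (n + 1)) := by
        intro n hn ih hup
        have hvn := ih (by omega)
        have hx : (n + 1, n + 1 + c) ∈ S := diag_convex' hsd hxi hxi' (by omega) (by omega)
        have hm : (n, n + c + 1) ∈ S :=
          hsd.wedge hyi hyi' (by omega) (by omega) (by omega) (by omega)
        exact VC_propagate_up hP hvn hx hm
      intro k hk
      exact int_le_ind (P := fun n => n ≤ i' → VC P c n) (fun _ => base) step k hk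
    exact not_VC_HC_same hP (key i' hle le_rfl) hh
  · -- propagate down from i to i' + 1
    have key : ∀ k, k ≤ i → (i' + 1 ≤ k → VC P c k) := by
      have step : ∀ n, n ≤ i → (i' + 1 ≤ n → VC P c n) → (i' + 1 ≤ n - 1 → VC P c (n - 1)) := by
        intro n hn ih hlow
        have hvn := ih (by omega)
        have hq : (n - 1, n - 1 + c) ∈ S := diag_convex' hsd hxi' hxi (by omega) (by omega)
        have hq2 : (n - 2, n - 1 + c) ∈ S :=
          hsd.wedge hyi' hyi (by omega) (by omega) (by omega) (by omega)
        exact VC_propagate_down hP hvn hq hq2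
      exact int_ge_ind (Q := fun n => i' + 1 ≤ n → VC P c n) (fun _ => hv) step
    have hvlast : VC P c (i' + 1) := key (i' + 1) (by omega) le_rfl
    -- final clash
    obtain ⟨θ, hθ, h1, h2⟩ := hvlast
    obtain ⟨θ', hθ', h1', h2'⟩ := hh
    have hcell : ((i' + 1 - 1 : ℤ), i' + 1 + c) = ((i' : ℤ), i' + c + 1) := by
      simp only [Prod.mk.injEq]; omega
    rw [hcell] at h2
    have heq : θ = θ' := strip_unique hP hθ hθ' h2 h2'
    subst heq
    exact bs_no_L_dr (hP.1 θ hθ).1 h1' h2' (mem_congr' h1 rfl (by ring))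

/-- Lemma A : if some vertical crossing exists at content c, every vertically adjacent
pair at content c lies in a common strip -/
lemma VC_forced (hsd : SkewData S lam mu) {c i0 : ℤ} (hv0 : VC P c i0) {i : ℤ}
    (hx : (i, i + c) ∈ S) (hy : (i - 1, i + c) ∈ S) : VC P c i := by
  by_contra hnv
  obtain ⟨θp, hθp, hpp⟩ := hP.2.1 (i, i + c) hx
  have hnr : (i, i + c + 1) ∉ θp := by
    intro hmem
    exact not_VC_and_HC hP hsd hv0 ⟨θp, hθp, hpp, hmem⟩
  have hnu : (i - 1, i + c) ∉ θp := fun hmem => hnv ⟨θp, hθp, hpp, hmem⟩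
  have hterm := (hP.1 θp hθp).2.2.2 (i, i + c) hpp
  simp only at hterm
  have hterm' := hterm ⟨hnr, hnu⟩
  have hrtS : (i, i + c + 1) ∉ S := by
    rcases hterm' with h | h
    · exact h
    · exact absurd hy h
  -- the cell above
  obtain ⟨θq, hθq, hqq⟩ := hP.2.1 (i - 1, i + c) hy
  have hqx : (i, i + c) ∉ θq := by
    intro hmem
    have : θq = θp := strip_unique hP hθq hθp hmem hpp
    rw [this] at hqq
    exact hnu hqq
  have hql : (i - 1, i - 1 + c) ∉ θq := by
    intro hmem
    exact not_VC_and_HC hP hsd hv0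
      ⟨θq, hθq, hmem, mem_congr' hqq rfl (by ring)⟩
  have hinit := (hP.1 θq hθq).2.2.1 (i - 1, i + c) hqq
  simp only at hinit
  have hinit' := hinit ⟨notmem_congr' hql rfl (by ring), notmem_congr' hqx (by ring) rfl⟩
  have hlq : (i - 1, i - 1 + c) ∉ S := by
    rcases hinit' with h | h
    · exact notmem_congr' h rfl (by ring)
    · exact absurd (mem_congr' hx (by ring) rfl) h
  -- interval endpoint arithmetic
  have hxi0 : (i0, i0 + c) ∈ S := (VC_memS hP hv0).1
  have hyi0 : (i0 - 1, i0 + c) ∈ S := (VC_memS hP hv0).2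
  have hge : i ≤ i0 := by
    by_contra hcon
    push_neg at hcon
    exact hlq (diag_convex' hsd hxi0 hx (by omega) (by omega))
  have hle : i0 ≤ i := by
    by_contra hcon
    push_neg at hcon
    have : (i, i + c + 1) ∈ S :=
      hsd.wedge hy hyi0 (by omega) (by omega) (by omega) (by omega)
    exact hrtS this
  have : i = i0 := by omega
  subst this
  exact hnv hv0

/-- Lemma A' : horizontal version -/
lemma HC_forced (hsd : SkewData S lam mu) {c i0 : ℤ} (hh0 : HC P c i0) {i : ℤ}
    (hx : (i, i + c) ∈ S) (hy : (i, i + c + 1) ∈ S) : HC P c i := by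
  by_contra hnh
  obtain ⟨θp, hθp, hpp⟩ := hP.2.1 (i, i + c) hx
  have hnr : (i, i + c + 1) ∉ θp := fun hmem => hnh ⟨θp, hθp, hpp, hmem⟩
  have hnu : (i - 1, i + c) ∉ θp := by
    intro hmem
    exact not_VC_and_HC hP hsd ⟨θp, hθp, hpp, hmem⟩ hh0
  have hterm := (hP.1 θp hθp).2.2.2 (i, i + c) hpp
  simp only at hterm
  have hterm' := hterm ⟨hnr, hnu⟩
  have hupS : (i - 1, i + c) ∉ S := by
    rcases hterm' with h | h
    · exact absurd hy h
    · exact h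
  obtain ⟨θq, hθq, hqq⟩ := hP.2.1 (i, i + c + 1) hy
  have hqx : (i, i + c) ∉ θq := by
    intro hmem
    have : θq = θp := strip_unique hP hθq hθp hmem hpp
    rw [this] at hqq
    exact hnr hqq
  have hqd : (i + 1, i + c + 1) ∉ θq := by
    intro hmem
    have hvc : VC P c (i + 1) := ⟨θq, hθq, mem_congr' hmem rfl (by ring),
      mem_congr' hqq (by ring) (by ring)⟩
    exact not_VC_and_HC hP hsd hvc hh0
  have hinit := (hP.1 θq hθq).2.2.1 (i, i + c + 1) hqq
  simp only at hinit
  have hinit' := hinit ⟨notmem_congr' hqx rfl (by ring), hqd⟩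
  have hdS : (i + 1, i + c + 1) ∉ S := by
    rcases hinit' with h | h
    · exact absurd (mem_congr' hx rfl (by ring)) h
    · exact h
  have hxi0 : (i0, i0 + c) ∈ S := (HC_memS hP hh0).1
  have hyi0 : (i0, i0 + c + 1) ∈ S := (HC_memS hP hh0).2
  have hle : i0 ≤ i := by
    by_contra hcon
    push_neg at hcon
    have : (i + 1, i + c + 1) ∈ S :=
      hsd.wedge hx hxi0 (by omega) (by omega) (by omega) (by omega)
    exact hdS this
  have hge : i ≤ i0 := by
    by_contra hcon
    push_neg at hcon
    have : (i - 1, i + c) ∈ S :=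
      hsd.wedge hyi0 hy (by omega) (by omega) (by omega) (by omega)
    exact hupS this
  have : i = i0 := by omega
  subst this
  exact hnh hh0

/-- NC : with no crossing at content c, vertical and horizontal adjacencies cannot
both exist -/
lemma no_crossing_no_mixed_adj (hsd : SkewData S lam mu) {c : ℤ}
    (hnv : ∀ i, ¬ VC P c i) (hnh : ∀ i, ¬ HC P c i) {i i' : ℤ}
    (hx : (i, i + c) ∈ S) (hy : (i - 1, i + c) ∈ S)
    (hx' : (i', i' + c) ∈ S) (hy' : (i', i' + c + 1) ∈ S) : False := by
  -- terminal at (i, i+c)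
  obtain ⟨θp, hθp, hpp⟩ := hP.2.1 (i, i + c) hx
  have hterm := (hP.1 θp hθp).2.2.2 (i, i + c) hpp
  simp only at hterm
  have hterm' := hterm ⟨fun hmem => hnh i ⟨θp, hθp, hpp, hmem⟩,
    fun hmem => hnv i ⟨θp, hθp, hpp, hmem⟩⟩
  have hrtS : (i, i + c + 1) ∉ S := by
    rcases hterm' with h | h
    · exact h
    · exact absurd hy h
  -- initial at (i-1, i+c)
  obtain ⟨θq, hθq, hqq⟩ := hP.2.1 (i - 1, i + c) hy
  have hinit := (hP.1 θq hθq).2.2.1 (i - 1, i + c) hqq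
  simp only at hinit
  have hinit' := hinit ⟨fun hmem => hnh (i - 1)
      ⟨θq, hθq, mem_congr' hmem rfl (by ring), mem_congr' hqq rfl (by ring)⟩,
    fun hmem => hnv i ⟨θq, hθq, mem_congr' hmem (by ring) rfl, hqq⟩⟩
  have hlS : (i - 1, i - 1 + c) ∉ S := by
    rcases hinit' with h | h
    · exact notmem_congr' h rfl (by ring)
    · exact absurd (mem_congr' hx (by ring) rfl) h
  -- terminal at (i', i'+c)
  obtain ⟨θr, hθr, hrr⟩ := hP.2.1 (i', i' + c) hx'
  have hterm2 := (hP.1 θr hθr).2.2.2 (i', i' + c) hrr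
  simp only at hterm2
  have hterm2' := hterm2 ⟨fun hmem => hnh i' ⟨θr, hθr, hrr, hmem⟩,
    fun hmem => hnv i' ⟨θr, hθr, hrr, hmem⟩⟩
  have hupS : (i' - 1, i' + c) ∉ S := by
    rcases hterm2' with h | h
    · exact absurd hy' h
    · exact h
  -- initial at (i', i'+c+1)
  obtain ⟨θs, hθs, hss⟩ := hP.2.1 (i', i' + c + 1) hy'
  have hinit2 := (hP.1 θs hθs).2.2.1 (i', i' + c + 1) hss
  simp only at hinit2
  have hinit2' := hinit2 ⟨fun hmem => hnh i'
      ⟨θs, hθs, mem_congr' hmem rfl (by ring), hss⟩,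
    fun hmem => hnv (i' + 1)
      ⟨θs, hθs, mem_congr' hmem rfl (by ring), mem_congr' hss (by ring) (by ring)⟩⟩
  have hdS : (i' + 1, i' + c + 1) ∉ S := by
    rcases hinit2' with h | h
    · exact absurd (mem_congr' hx' rfl (by ring)) h
    · exact h
  -- interval arithmetic
  have h1 : i ≤ i' := by
    by_contra hcon
    push_neg at hcon
    rcases le_or_gt i' (i - 1) with h | h
    · exact hlS (diag_convex' hsd hx' hx (by omega) (by omega))
    · omega
  have h2 : i' < i := by
    by_contra hcon
    push_neg at hcon
    have : (i, i + c + 1) ∈ S :=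
      hsd.wedge hy hy' (by omega) (by omega) (by omega) (by omega)
    exact hrtS this
  omega

end OutsideDecomp
end OD

namespace OD
open scoped Classical

/-- direction function extracted from an outside decomposition -/
noncomputable def epsP (S : Finset (ℤ × ℤ)) (P : Finset (Finset (ℤ × ℤ)))
    (c0 : ℤ) (d : ℕ) : ℤ → Bool := fun c =>
  if c0 ≤ c ∧ c ≤ c0 + (d : ℤ) - 2 then
    (if ∃ i, VC P c i then true
     else if ∃ i, HC P c i then false
     else if ∃ i : ℤ, (i, i + c) ∈ S ∧ (i - 1, i + c) ∈ S then false
     else true)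
  else false

variable {S : Finset (ℤ × ℤ)} {P : Finset (Finset (ℤ × ℤ))} {lam mu : ℤ → ℤ}
  {c0 : ℤ} {d : ℕ}

lemma ct_bounds (hD : S.image (fun p => p.2 - p.1) = Finset.Icc c0 (c0 + (d : ℤ) - 1))
    {p : ℤ × ℤ} (hp : p ∈ S) : c0 ≤ p.2 - p.1 ∧ p.2 - p.1 ≤ c0 + (d : ℤ) - 1 := by
  have : p.2 - p.1 ∈ S.image (fun p => p.2 - p.1) := Finset.mem_image_of_mem _ hp
  rw [hD, Finset.mem_Icc] at this
  exact this

lemma self_pair {p : ℤ × ℤ} : (p.1, p.1 + (p.2 - p.1)) = p := Prod.ext rfl (by ring)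

section P6
variable (hP : IsOutsideDecomposition S P) (hsd : SkewData S lam mu)
  (hD : S.image (fun p => p.2 - p.1) = Finset.Icc c0 (c0 + (d : ℤ) - 1))

include hP hsd hD

/-- consecutive cells in a strip of P follow epsP -/
lemma strip_step {θ : Finset (ℤ × ℤ)} {p q : ℤ × ℤ} (hθ : θ ∈ P) (hp : p ∈ θ)
    (hq : q ∈ θ) (hc : q.2 - q.1 = p.2 - p.1 + 1) : q = succC (epsP S P c0 d) p := by
  have hsub := (hP.1 θ hθ).2.1
  have hbp := ct_bounds hD (hsub hp)
  have hbq := ct_bounds hD (hsub hq)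
  set c := p.2 - p.1 with hcdef
  have hg : c0 ≤ c ∧ c ≤ c0 + (d : ℤ) - 2 := by omega
  have hch := isChain_of_borderStrip (hP.1 θ hθ).1
  have hstep := hch.2.2.1 p hp q hq hc
  have hpθ : (p.1, p.1 + c) ∈ θ := by rw [hcdef, self_pair]; exact hp
  rcases hstep with h | h
  · -- vertical
    have hvc : VC P c p.1 := by
      refine ⟨θ, hθ, hpθ, ?_⟩
      rw [h] at hq
      exact mem_congr' hq rfl (by rw [hcdef]; ring)
    have he : epsP S P c0 d c = true := by
      rw [epsP]
      simp only [if_pos hg]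
      rw [if_pos ⟨p.1, hvc⟩]
    rw [succC, ← hcdef, he, if_pos rfl, h]
  · -- horizontal
    have hhc : HC P c p.1 := by
      refine ⟨θ, hθ, hpθ, ?_⟩
      rw [h] at hq
      exact mem_congr' hq rfl (by rw [hcdef]; ring)
    have hnv : ¬ ∃ i, VC P c i := by
      rintro ⟨i0, hv⟩
      exact not_VC_and_HC hP hsd hv hhc
    have he : epsP S P c0 d c = false := by
      rw [epsP]
      simp only [if_pos hg]
      rw [if_neg hnv, if_pos ⟨p.1, hhc⟩]
    rw [succC, ← hcdef, he]
    simp only [Bool.false_eq_true, if_false]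
    rw [h]

/-- a cell whose epsP-successor is in S shares a strip with it -/
lemma succ_in_strip {p : ℤ × ℤ} (hp : p ∈ S) (hs : succC (epsP S P c0 d) p ∈ S) :
    ∃ θ ∈ P, p ∈ θ ∧ succC (epsP S P c0 d) p ∈ θ := by
  have hbp := ct_bounds hD hp
  have hbs := ct_bounds hD hs
  have hsc := succC_content (epsP S P c0 d) p
  set c := p.2 - p.1 with hcdef
  have hg : c0 ≤ c ∧ c ≤ c0 + (d : ℤ) - 2 := by omega
  have hpS : (p.1, p.1 + c) ∈ S := by rw [hcdef, self_pair]; exact hp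
  cases hb : epsP S P c0 d c with
  | true =>
    have hsucc : succC (epsP S P c0 d) p = (p.1 - 1, p.2) := by
      rw [succC, ← hcdef, hb, if_pos rfl]
    rw [hsucc] at hs ⊢
    have hyS : (p.1 - 1, p.1 + c) ∈ S := mem_congr' hs rfl (by rw [hcdef]; ring)
    by_cases hv : ∃ i, VC P c i
    · obtain ⟨i0, hv0⟩ := hv
      obtain ⟨θ, hθ, h1, h2⟩ := VC_forced hP hsd hv0 hpS hyS
      refine ⟨θ, hθ, ?_, ?_⟩
      · rwa [hcdef, self_pair] at h1
      · exact mem_congr' h2 rfl (by rw [hcdef]; ring)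
    · exfalso
      have hva : ∃ i : ℤ, (i, i + c) ∈ S ∧ (i - 1, i + c) ∈ S := ⟨p.1, hpS, hyS⟩
      have : epsP S P c0 d c = false := by
        rw [epsP]
        simp only [if_pos hg]
        rw [if_neg hv]
        by_cases hh : ∃ i, HC P c i
        · rw [if_pos hh]
        · rw [if_neg hh, if_pos hva]
      rw [this] at hb; exact Bool.false_ne_true hb
  | false =>
    have hsucc : succC (epsP S P c0 d) p = (p.1, p.2 + 1) := by
      rw [succC, ← hcdef, hb]
      simp only [Bool.false_eq_true, if_false]
    rw [hsucc] at hs ⊢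
    have hyS : (p.1, p.1 + c + 1) ∈ S := mem_congr' hs rfl (by rw [hcdef]; ring)
    have hnv : ¬ ∃ i, VC P c i := by
      rintro ⟨i0, hv0⟩
      have : epsP S P c0 d c = true := by
        rw [epsP]; simp only [if_pos hg]; rw [if_pos ⟨i0, hv0⟩]
      rw [this] at hb; simp at hb
    by_cases hh : ∃ i, HC P c i
    · obtain ⟨i0, hh0⟩ := hh
      obtain ⟨θ, hθ, h1, h2⟩ := HC_forced hP hsd hh0 hpS hyS
      refine ⟨θ, hθ, ?_, ?_⟩
      · rwa [hcdef, self_pair] at h1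
      · exact mem_congr' h2 rfl (by rw [hcdef]; ring)
    · exfalso
      by_cases hva : ∃ i : ℤ, (i, i + c) ∈ S ∧ (i - 1, i + c) ∈ S
      · obtain ⟨i1, hv1, hv2⟩ := hva
        push_neg at hnv hh
        exact no_crossing_no_mixed_adj hP hsd hnv hh hv1 hv2 hpS hyS
      · have : epsP S P c0 d c = true := by
          rw [epsP]; simp only [if_pos hg]
          rw [if_neg hnv, if_neg hh, if_neg hva]
        rw [this] at hb; simp at hb

end P6

section P6b
variable {S : Finset (ℤ × ℤ)} {P : Finset (Finset (ℤ × ℤ))} {lam mu : ℤ → ℤ}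
  {c0 : ℤ} {d : ℕ}
variable (hP : IsOutsideDecomposition S P) (hsd : SkewData S lam mu)
  (hD : S.image (fun p => p.2 - p.1) = Finset.Icc c0 (c0 + (d : ℤ) - 1))

include hP hsd hD

lemma rel_up_in_strip {θ : Finset (ℤ × ℤ)} (hθ : θ ∈ P) {a b : ℤ × ℤ}
    (h : Rel S (epsP S P c0 d) a b) (ha : a ∈ θ) : b ∈ θ := by
  induction h with
  | refl => exact ha
  | @tail m b h1 h2 ih =>
    have hm : m ∈ θ := ih
    obtain ⟨θ', hθ', hm', hb'⟩ := succ_in_strip hP hsd hD h2.1 (h2.2.2 ▸ h2.2.1)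
    have : θ' = θ := strip_unique hP hθ' hθ hm' hm
    rw [this] at hb'
    rwa [h2.2.2]

lemma rel_down_in_strip {θ : Finset (ℤ × ℤ)} (hθ : θ ∈ P) {a b : ℤ × ℤ}
    (h : Rel S (epsP S P c0 d) a b) (hb : b ∈ θ) : a ∈ θ := by
  induction h with
  | refl => exact hb
  | @tail m b h1 h2 ih =>
    obtain ⟨θ', hθ', hm', hb'⟩ := succ_in_strip hP hsd hD h2.1 (h2.2.2 ▸ h2.2.1)
    rw [← h2.2.2] at hb'
    have : θ' = θ := strip_unique hP hθ' hθ hb' hb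
    rw [this] at hm'
    exact ih hm'

lemma strip_rel {θ : Finset (ℤ × ℤ)} (hθ : θ ∈ P) :
    ∀ n : ℕ, ∀ q ∈ θ, ∀ q' ∈ θ, q'.2 - q'.1 = q.2 - q.1 + (n : ℤ) →
      Rel S (epsP S P c0 d) q q' := by
  have hch := isChain_of_borderStrip (hP.1 θ hθ).1
  have hsub := (hP.1 θ hθ).2.1
  intro n
  induction n with
  | zero =>
    intro q hq q' hq' hc
    have : q = q' := hch.2.1 q hq q' hq' (by push_cast at hc; omega)
    rw [this]
    exact Relation.ReflTransGen.refl
  | succ n ih =>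
    intro q hq q' hq' hc
    push_cast at hc
    obtain ⟨r, hr, hrc⟩ := hch.2.2.2 q hq q' hq' (q.2 - q.1 + n) (by omega) (by omega)
    have h1 : Rel S (epsP S P c0 d) q r := ih q hq r hr (by omega)
    have h2 : q' = succC (epsP S P c0 d) r := strip_step hP hsd hD hθ hr hq' (by omega)
    exact h1.tail ⟨hsub hr, hsub hq', h2⟩

lemma strip_eq_orbit {θ : Finset (ℤ × ℤ)} {p : ℤ × ℤ} (hθ : θ ∈ P) (hp : p ∈ θ) :
    θ = orbit S (epsP S P c0 d) p := by
  have hsub := (hP.1 θ hθ).2.1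
  ext x
  constructor
  · intro hx
    rw [mem_orbit_iff]
    refine ⟨hsub hx, ?_⟩
    rcases le_total (p.2 - p.1) (x.2 - x.1) with h | h
    · left
      have : x.2 - x.1 = p.2 - p.1 + ((x.2 - x.1 - (p.2 - p.1)).toNat : ℤ) := by omega
      exact strip_rel hP hsd hD hθ _ p hp x hx this
    · right
      have : p.2 - p.1 = x.2 - x.1 + ((p.2 - p.1 - (x.2 - x.1)).toNat : ℤ) := by omega
      exact strip_rel hP hsd hD hθ _ x hx p hp this
  · intro hx
    obtain ⟨hxS, hcon⟩ := mem_orbit_iff.mp hx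
    rcases hcon with h | h
    · exact rel_up_in_strip hP hsd hD hθ h hp
    · exact rel_down_in_strip hP hsd hD hθ h hp

/-- round trip : the decomposition of the extracted direction function is P itself -/
lemma decomp_epsP : decomp S (epsP S P c0 d) = P := by
  ext θ
  constructor
  · intro hθ
    obtain ⟨p, hp, rfl⟩ := Finset.mem_image.mp hθ
    obtain ⟨θ', hθ', hpθ'⟩ := hP.2.1 p hp
    rw [← strip_eq_orbit hP hsd hD hθ' hpθ']
    exact hθ'
  · intro hθ
    obtain ⟨p, hp⟩ := (hP.1 θ hθ).1.1
    have : θ = orbit S (epsP S P c0 d) p := strip_eq_orbit hP hsd hD hθ hp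
    rw [this]
    exact Finset.mem_image_of_mem _ ((hP.1 θ hθ).2.1 hp)

end P6b

section P6c
variable {S : Finset (ℤ × ℤ)} {lam mu : ℤ → ℤ} {c0 : ℤ} {d : ℕ} {ε : ℤ → Bool}

/-- round trip : extracting the direction function from `decomp S ε` returns ε -/
lemma epsP_decomp (hsd : SkewData S lam mu) (hconn : EdgewiseConnected S)
    (hD : S.image (fun p => p.2 - p.1) = Finset.Icc c0 (c0 + (d : ℤ) - 1))
    (hE : ∀ c, ε c = true → c0 ≤ c ∧ c ≤ c0 + (d : ℤ) - 2) :
    epsP S (decomp S ε) c0 d = ε := by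
  have hP := (decomp_isOutsideDecomposition : IsOutsideDecomposition S (decomp S ε))
  funext c
  by_cases hg : c0 ≤ c ∧ c ≤ c0 + (d : ℤ) - 2
  · -- both contents c and c+1 occur
    have hc1 : c ∈ S.image (fun p => p.2 - p.1) := by rw [hD, Finset.mem_Icc]; omega
    have hc2 : c + 1 ∈ S.image (fun p => p.2 - p.1) := by rw [hD, Finset.mem_Icc]; omega
    obtain ⟨pl, hpl, hplc⟩ := Finset.mem_image.mp hc1
    obtain ⟨pu, hpu, hpuc⟩ := Finset.mem_image.mp hc2
    obtain ⟨x, hx, y, hy, hxc, hyc, hadj⟩ :=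
      exists_crossing hconn (c := c) hpl hpu (by omega) (by omega)
    have hxx : (x.1, x.1 + c) = x := Prod.ext rfl (by omega)
    have hadj' : y = (x.1 - 1, x.2) ∨ y = (x.1, x.2 + 1) := adj_up_or_right hadj (by omega)
    have hVmem : ∀ i : ℤ, VC (decomp S ε) c i → (i, i + c) ∈ S ∧ (i - 1, i + c) ∈ S :=
      fun i hv => VC_memS hP hv
    have hVsucc : ∀ i : ℤ, VC (decomp S ε) c i →
        ((i - 1 : ℤ), i + c) = succC ε (i, i + c) := by
      intro i hv
      obtain ⟨θ, hθ, h1, h2⟩ := hv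
      obtain ⟨p, hp, rfl⟩ := Finset.mem_image.mp hθ
      exact orbit_consec h1 h2 (by show i + c - (i - 1) = i + c - i + 1; ring)
    have hHsucc : ∀ i : ℤ, HC (decomp S ε) c i →
        ((i : ℤ), i + c + 1) = succC ε (i, i + c) := by
      intro i hh
      obtain ⟨θ, hθ, h1, h2⟩ := hh
      obtain ⟨p, hp, rfl⟩ := Finset.mem_image.mp hθ
      exact orbit_consec h1 h2 (by show i + c + 1 - i = i + c - i + 1; ring)
    cases hec : ε c with
    | true =>
      have hnH : ¬ ∃ i, HC (decomp S ε) c i := by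
        rintro ⟨i, hh⟩
        have := hHsucc i hh
        rw [succC] at this
        simp only [show ((i : ℤ), i + c).2 - ((i : ℤ), i + c).1 = c by simp] at this
        rw [hec, if_pos rfl] at this
        simp only [Prod.mk.injEq] at this
        omega
      by_cases hva : ∃ i : ℤ, (i, i + c) ∈ S ∧ (i - 1, i + c) ∈ S
      · obtain ⟨i, h1, h2⟩ := hva
        have hcr := decomp_cross_up_iff.mpr ⟨hec, (i, i + c), h1,
          by show i + c - i = c; ring, h2⟩
        obtain ⟨q, hq, hqc, hup⟩ := hcr
        have hVC : ∃ i, VC (decomp S ε) c i := by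
          refine ⟨q.1, orbit S ε q, Finset.mem_image_of_mem _ hq, ?_, ?_⟩
          · have : (q.1, q.1 + c) = q := Prod.ext rfl (by omega)
            rw [this]; exact mem_orbit_self hq
          · exact mem_congr' hup rfl (by omega)
        rw [epsP]
        simp only [if_pos hg]
        rw [if_pos hVC]
      · have hnV : ¬ ∃ i, VC (decomp S ε) c i := by
          rintro ⟨i, hv⟩
          exact hva ⟨i, hVmem i hv⟩
        rw [epsP]
        simp only [if_pos hg]
        rw [if_neg hnV, if_neg hnH, if_neg hva]
    | false =>
      have hnV : ¬ ∃ i, VC (decomp S ε) c i := by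
        rintro ⟨i, hv⟩
        have := hVsucc i hv
        rw [succC] at this
        simp only [show ((i : ℤ), i + c).2 - ((i : ℤ), i + c).1 = c by simp] at this
        rw [hec] at this
        simp only [Bool.false_eq_true, if_false, Prod.mk.injEq] at this
        omega
      by_cases hha : ∃ i : ℤ, (i, i + c) ∈ S ∧ (i, i + c + 1) ∈ S
      · obtain ⟨i, h1, h2⟩ := hha
        have hcr := decomp_cross_right_iff.mpr ⟨hec, (i, i + c), h1,
          by show i + c - i = c; ring, h2⟩
        obtain ⟨q, hq, hqc, hrt⟩ := hcr
        have hHC : ∃ i, HC (decomp S ε) c i := by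
          refine ⟨q.1, orbit S ε q, Finset.mem_image_of_mem _ hq, ?_, ?_⟩
          · have : (q.1, q.1 + c) = q := Prod.ext rfl (by omega)
            rw [this]; exact mem_orbit_self hq
          · exact mem_congr' hrt rfl (by omega)
        rw [epsP]
        simp only [if_pos hg]
        rw [if_neg hnV, if_pos hHC]
      · -- no horizontal adjacency ⇒ the crossing pair must be vertical
        have hva : ∃ i : ℤ, (i, i + c) ∈ S ∧ (i - 1, i + c) ∈ S := by
          rcases hadj' with h | h
          · refine ⟨x.1, by rwa [hxx], ?_⟩
            rw [h] at hy
            exact mem_congr' hy rfl (by omega)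
          · exfalso
            refine hha ⟨x.1, by rwa [hxx], ?_⟩
            rw [h] at hy
            exact mem_congr' hy rfl (by omega)
        have hnH : ¬ ∃ i, HC (decomp S ε) c i := by
          rintro ⟨i, hh⟩
          obtain ⟨θ, hθ, h1, h2⟩ := hh
          exact hha ⟨i, (hP.1 θ hθ).2.1 h1, (hP.1 θ hθ).2.1 h2⟩
        rw [epsP]
        simp only [if_pos hg]
        rw [if_neg hnV, if_neg hnH, if_pos hva]
  · rw [epsP]
    simp only [if_neg hg]
    cases hec : ε c with
    | true => exact absurd (hE c hec) hg
    | false => rfl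

end P6c
end OD

namespace OD
open scoped Classical

/-- the cells of the normalized border strip determined by a direction function -/
def pt (ε : ℤ → Bool) (c0 : ℤ) : ℕ → ℤ × ℤ
  | 0 => (0, 0)
  | n + 1 =>
    if ε (c0 + (n : ℤ)) then ((pt ε c0 n).1 - 1, (pt ε c0 n).2)
    else ((pt ε c0 n).1, (pt ε c0 n).2 + 1)

def Tof (ε : ℤ → Bool) (c0 : ℤ) (d : ℕ) : Finset (ℤ × ℤ) :=
  (Finset.range d).image (pt ε c0)

noncomputable def epsT (T : Finset (ℤ × ℤ)) (c0 : ℤ) (d : ℕ) : ℤ → Bool := fun c =>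
  if (c0 ≤ c ∧ c ≤ c0 + (d : ℤ) - 2) ∧
      (∃ p ∈ T, p.2 - p.1 = c - c0 ∧ (p.1 - 1, p.2) ∈ T) then true else false

variable {ε : ℤ → Bool} {c0 : ℤ} {d : ℕ}

lemma pt_content (ε : ℤ → Bool) (c0 : ℤ) : ∀ n : ℕ, (pt ε c0 n).2 - (pt ε c0 n).1 = n := by
  intro n
  induction n with
  | zero => simp [pt]
  | succ n ih =>
    rw [pt]
    split
    · simp only; push_cast; omega
    · simp only; push_cast; omega

lemma pt_quadrant (ε : ℤ → Bool) (c0 : ℤ) : ∀ n : ℕ, (pt ε c0 n).1 ≤ 0 ∧ 0 ≤ (pt ε c0 n).2 := by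
  intro n
  induction n with
  | zero => simp [pt]
  | succ n ih =>
    rw [pt]
    split
    · simp only; omega
    · simp only; omega

lemma pt_step_true {n : ℕ} (h : ε (c0 + (n : ℤ)) = true) :
    pt ε c0 (n + 1) = ((pt ε c0 n).1 - 1, (pt ε c0 n).2) := by
  rw [pt, if_pos h]

lemma pt_step_false {n : ℕ} (h : ε (c0 + (n : ℤ)) = false) :
    pt ε c0 (n + 1) = ((pt ε c0 n).1, (pt ε c0 n).2 + 1) := by
  rw [pt, if_neg (by rw [h]; exact Bool.false_ne_true)]

lemma mem_Tof {q : ℤ × ℤ} : q ∈ Tof ε c0 d ↔ ∃ n, n < d ∧ pt ε c0 n = q := by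
  unfold Tof
  simp [Finset.mem_image, Finset.mem_range]

lemma Tof_isChain (hd : 0 < d) : IsChain (Tof ε c0 d) := by
  refine ⟨⟨(0, 0), mem_Tof.mpr ⟨0, hd, rfl⟩⟩, ?_, ?_, ?_⟩
  · intro p hp q hq hc
    obtain ⟨n, hn, rfl⟩ := mem_Tof.mp hp
    obtain ⟨m, hm, rfl⟩ := mem_Tof.mp hq
    have h1 := pt_content ε c0 n
    have h2 := pt_content ε c0 m
    have : n = m := by omega
    rw [this]
  · intro p hp q hq hc
    obtain ⟨n, hn, rfl⟩ := mem_Tof.mp hp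
    obtain ⟨m, hm, rfl⟩ := mem_Tof.mp hq
    have h1 := pt_content ε c0 n
    have h2 := pt_content ε c0 m
    have hm' : m = n + 1 := by omega
    subst hm'
    cases hb : ε (c0 + (n : ℤ)) with
    | true => rw [pt_step_true hb]; left; rfl
    | false => rw [pt_step_false hb]; right; rfl
  · intro p hp q hq c h1 h2
    obtain ⟨n, hn, rfl⟩ := mem_Tof.mp hp
    obtain ⟨m, hm, rfl⟩ := mem_Tof.mp hq
    have hc1 := pt_content ε c0 n
    have hc2 := pt_content ε c0 m
    refine ⟨pt ε c0 c.toNat, mem_Tof.mpr ⟨c.toNat, by omega, rfl⟩, ?_⟩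
    rw [pt_content]
    omega

lemma Tof_card : (Tof ε c0 d).card = d := by
  unfold Tof
  rw [Finset.card_image_of_injOn, Finset.card_range]
  intro a ha b hb hab
  have h1 := pt_content ε c0 a
  have h2 := pt_content ε c0 b
  rw [hab] at h1
  omega

/-- the content image of a connected set is an interval -/
lemma content_image_Icc {U : Finset (ℤ × ℤ)} (hne : U.Nonempty)
    (hival : ∀ p ∈ U, ∀ q ∈ U, ∀ c : ℤ, p.2 - p.1 ≤ c → c ≤ q.2 - q.1 →
      ∃ r ∈ U, r.2 - r.1 = c) :
    ∃ a : ℤ, U.image (fun p => p.2 - p.1) =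
      Finset.Icc a (a + ((U.image (fun p => p.2 - p.1)).card : ℤ) - 1) := by
  set X := U.image (fun p => p.2 - p.1) with hX
  have hXne : X.Nonempty := hne.image _
  have hsub : X ⊆ Finset.Icc (X.min' hXne) (X.max' hXne) := by
    intro c hc
    rw [Finset.mem_Icc]
    exact ⟨Finset.min'_le _ _ hc, Finset.le_max' _ _ hc⟩
  have hsup : Finset.Icc (X.min' hXne) (X.max' hXne) ⊆ X := by
    intro c hc
    rw [Finset.mem_Icc] at hc
    obtain ⟨pl, hpl, hplc⟩ := Finset.mem_image.mp (X.min'_mem hXne)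
    obtain ⟨pu, hpu, hpuc⟩ := Finset.mem_image.mp (X.max'_mem hXne)
    obtain ⟨r, hr, hrc⟩ := hival pl hpl pu hpu c (by omega) (by omega)
    rw [hX, Finset.mem_image]
    exact ⟨r, hr, hrc⟩
  have hXeq : X = Finset.Icc (X.min' hXne) (X.max' hXne) :=
    Finset.Subset.antisymm hsub hsup
  have hcard := congrArg Finset.card hXeq
  rw [Int.card_Icc] at hcard
  have hminmax : X.min' hXne ≤ X.max' hXne :=
    Finset.min'_le _ _ (X.max'_mem hXne)
  refine ⟨X.min' hXne, ?_⟩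
  have hend : X.min' hXne + (X.card : ℤ) - 1 = X.max' hXne := by omega
  rw [hend]
  exact hXeq

end OD

namespace OD
open scoped Classical

variable {T : Finset (ℤ × ℤ)} {S : Finset (ℤ × ℤ)} {P : Finset (Finset (ℤ × ℤ))}
  {c0 : ℤ} {d : ℕ} {ε : ℤ → Bool}

lemma epsT_ranged {c : ℤ} (h : epsT T c0 d c = true) : c0 ≤ c ∧ c ≤ c0 + (d : ℤ) - 2 := by
  rw [epsT] at h
  split at h
  · next hc => exact hc.1
  · simp at h

lemma epsP_ranged {c : ℤ} (h : epsP S P c0 d c = true) : c0 ≤ c ∧ c ≤ c0 + (d : ℤ) - 2 := by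
  rw [epsP] at h
  split at h
  · next hc => exact hc
  · simp at h

lemma epsT_Tof (hd : 0 < d) (hE : ∀ c, ε c = true → c0 ≤ c ∧ c ≤ c0 + (d : ℤ) - 2) :
    epsT (Tof ε c0 d) c0 d = ε := by
  funext c
  by_cases hg : c0 ≤ c ∧ c ≤ c0 + (d : ℤ) - 2
  · set k := (c - c0).toNat with hk
    have hck : c = c0 + (k : ℤ) := by omega
    cases hec : ε c with
    | true =>
      rw [epsT, if_pos]
      refine ⟨hg, pt ε c0 k, mem_Tof.mpr ⟨k, by omega, rfl⟩, by rw [pt_content]; omega, ?_⟩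
      have hstep : pt ε c0 (k + 1) = ((pt ε c0 k).1 - 1, (pt ε c0 k).2) :=
        pt_step_true (by rw [← hck]; exact hec)
      rw [← hstep]
      exact mem_Tof.mpr ⟨k + 1, by omega, rfl⟩
    | false =>
      rw [epsT, if_neg]
      rintro ⟨-, p, hp, hpc, hup⟩
      obtain ⟨n, hn, rfl⟩ := mem_Tof.mp hp
      have hnc := pt_content ε c0 n
      have hnk : n = k := by omega
      subst hnk
      obtain ⟨m, hm, hmq⟩ := mem_Tof.mp hup
      have hmc := pt_content ε c0 m
      have hm1 : m = k + 1 := by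
        rw [hmq] at hmc
        simp only at hmc
        omega
      subst hm1
      have hfalse : pt ε c0 (k + 1) = ((pt ε c0 k).1, (pt ε c0 k).2 + 1) :=
        pt_step_false (by rw [← hck]; exact hec)
      rw [hfalse] at hmq
      simp only [Prod.mk.injEq] at hmq
      omega
  · have hf : ε c = false := by
      cases h : ε c
      · rfl
      · exact absurd (hE c h) hg
    rw [epsT, if_neg (fun hcon => hg hcon.1), hf]

lemma T_norm (hbs : IsBorderStrip T) (hcard : T.card = d) (h0 : ((0 : ℤ), (0 : ℤ)) ∈ T)
    (hquad : ∀ p ∈ T, p.1 ≤ 0 ∧ 0 ≤ p.2) :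
    T.image (fun p => p.2 - p.1) = Finset.Icc 0 ((d : ℤ) - 1) := by
  have hch := isChain_of_borderStrip hbs
  have hne : T.Nonempty := hch.1
  obtain ⟨a, ha⟩ := content_image_Icc hne
    (fun p hp q hq c h1 h2 => hch.2.2.2 p hp q hq c h1 h2)
  have hcimg : (T.image (fun p => p.2 - p.1)).card = d := by
    rw [Finset.card_image_of_injOn, hcard]
    intro p hp q hq hpq
    exact hch.2.1 p hp q hq hpq
  rw [hcimg] at ha
  have hd : 0 < d := by
    have := Finset.card_pos.mpr hne
    omega
  have h0X : (0 : ℤ) ∈ T.image (fun p => p.2 - p.1) := by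
    rw [Finset.mem_image]
    exact ⟨((0 : ℤ), (0 : ℤ)), h0, by simp⟩
  have ha0 : a ≤ 0 := by
    rw [ha, Finset.mem_Icc] at h0X
    omega
  have haX : a ∈ T.image (fun p => p.2 - p.1) := by
    rw [ha, Finset.mem_Icc]
    omega
  have h0a : 0 ≤ a := by
    obtain ⟨p, hp, hpc⟩ := Finset.mem_image.mp haX
    have := hquad p hp
    omega
  have : a = 0 := by omega
  rw [this] at ha
  rw [ha]
  congr 1
  omega

lemma Tof_epsT (hbs : IsBorderStrip T) (hcard : T.card = d) (h0 : ((0 : ℤ), (0 : ℤ)) ∈ T)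
    (hquad : ∀ p ∈ T, p.1 ≤ 0 ∧ 0 ≤ p.2) :
    Tof (epsT T c0 d) c0 d = T := by
  have hch := isChain_of_borderStrip hbs
  have hne : T.Nonempty := hch.1
  have hd : 0 < d := by
    have := Finset.card_pos.mpr hne
    omega
  have himg := T_norm hbs hcard h0 hquad
  have hcell : ∀ k : ℕ, k < d → ∃ p ∈ T, p.2 - p.1 = (k : ℤ) := by
    intro k hk
    have : (k : ℤ) ∈ T.image (fun p => p.2 - p.1) := by
      rw [himg, Finset.mem_Icc]
      omega
    obtain ⟨p, hp, hpc⟩ := Finset.mem_image.mp this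
    exact ⟨p, hp, hpc⟩
  set ε' := epsT T c0 d with hε'
  have key : ∀ k : ℕ, k < d → pt ε' c0 k ∈ T := by
    intro k
    induction k with
    | zero =>
      intro _
      have : pt ε' c0 0 = ((0 : ℤ), (0 : ℤ)) := rfl
      rw [this]
      exact h0
    | succ k ih =>
      intro hk1
      have hk : k < d := by omega
      have hmem := ih hk
      obtain ⟨u, hu, huc⟩ := hcell (k + 1) hk1
      have hptc := pt_content ε' c0 k
      have hstep := hch.2.2.1 (pt ε' c0 k) hmem u hu (by rw [hptc, huc]; push_cast; ring)
      rcases hstep with h | h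
      · have hb : ε' (c0 + (k : ℤ)) = true := by
          rw [hε', epsT, if_pos]
          refine ⟨⟨by omega, by omega⟩, pt ε' c0 k, hmem, by omega, ?_⟩
          rw [← h]
          exact hu
        rw [pt_step_true hb, ← h]
        exact hu
      · have hb : ε' (c0 + (k : ℤ)) = false := by
          rw [hε', epsT, if_neg]
          rintro ⟨-, p, hp, hpc, hup⟩
          have hpk : p = pt ε' c0 k := hch.2.1 p hp _ hmem (by omega)
          rw [hpk] at hup
          have hupc : ((pt ε' c0 k).1 - 1, (pt ε' c0 k).2).2 -
              ((pt ε' c0 k).1 - 1, (pt ε' c0 k).2).1 = (k : ℤ) + 1 := by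
            simp only
            omega
          have : ((pt ε' c0 k).1 - 1, (pt ε' c0 k).2) = u :=
            hch.2.1 _ hup u hu (by omega)
          rw [h] at this
          simp only [Prod.mk.injEq] at this
          omega
        rw [pt_step_false hb, ← h]
        exact hu
  apply Finset.eq_of_subset_of_card_le
  · intro q hq
    obtain ⟨n, hn, rfl⟩ := mem_Tof.mp hq
    exact key n hn
  · rw [Tof_card, hcard]

end OD

/-- For an edgewise connected (nonempty) skew diagram `S` with `d` diagonals,
outside decompositions of `S` are in bijection with border strips of `d` boxes
(normalized, up to translation, so that the lower-left box is the origin). -/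
theorem outsideDecompositions_equiv_borderStrips (S : Finset (ℤ × ℤ))
    (hne : S.Nonempty) (hskew : IsSkewShape S) (hconn : EdgewiseConnected S) :
    Nonempty
      ({P : Finset (Finset (ℤ × ℤ)) // IsOutsideDecomposition S P} ≃
       {T : Finset (ℤ × ℤ) // IsBorderStrip T ∧
          T.card = (S.image fun p => p.2 - p.1).card ∧
          ((0 : ℤ), (0 : ℤ)) ∈ T ∧ ∀ p ∈ T, p.1 ≤ 0 ∧ 0 ≤ p.2}) := by
  classical
  obtain ⟨lam, mu, hlam, hmu, hmem⟩ := hskew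
  have hsd : OD.SkewData S lam mu := ⟨hlam, hmu, hmem⟩
  set d := (S.image fun p => p.2 - p.1).card with hd
  obtain ⟨c0, hD⟩ := OD.content_image_Icc hne
    (fun p hp q hq c h1 h2 => OD.exists_content_eq hconn hp hq h1 h2)
  have hdpos : 0 < d := Finset.card_pos.mpr (hne.image _)
  have e1 : {P : Finset (Finset (ℤ × ℤ)) // IsOutsideDecomposition S P} ≃
      {ε : ℤ → Bool // ∀ c, ε c = true → c0 ≤ c ∧ c ≤ c0 + (d : ℤ) - 2} :=
    { toFun := fun P => ⟨OD.epsP S P.1 c0 d, fun c h => OD.epsP_ranged h⟩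
      invFun := fun ε => ⟨OD.decomp S ε.1, OD.decomp_isOutsideDecomposition⟩
      left_inv := fun P => Subtype.ext (OD.decomp_epsP P.2 hsd hD)
      right_inv := fun ε => Subtype.ext (OD.epsP_decomp hsd hconn hD ε.2) }
  have e2 : {T : Finset (ℤ × ℤ) // IsBorderStrip T ∧
        T.card = (S.image fun p => p.2 - p.1).card ∧
        ((0 : ℤ), (0 : ℤ)) ∈ T ∧ ∀ p ∈ T, p.1 ≤ 0 ∧ 0 ≤ p.2} ≃
      {ε : ℤ → Bool // ∀ c, ε c = true → c0 ≤ c ∧ c ≤ c0 + (d : ℤ) - 2} :=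
    { toFun := fun T => ⟨OD.epsT T.1 c0 d, fun c h => OD.epsT_ranged h⟩
      invFun := fun ε => ⟨OD.Tof ε.1 c0 d,
        OD.borderStrip_of_isChain (OD.Tof_isChain hdpos),
        OD.Tof_card,
        OD.mem_Tof.mpr ⟨0, hdpos, rfl⟩,
        fun p hp => by
          obtain ⟨n, hn, rfl⟩ := OD.mem_Tof.mp hp
          exact OD.pt_quadrant _ _ n⟩
      left_inv := fun T => Subtype.ext (OD.Tof_epsT T.2.1 T.2.2.1 T.2.2.2.1 T.2.2.2.2)
      right_inv := fun ε => Subtype.ext (OD.epsT_Tof hdpos ε.2) }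
  exact ⟨e1.trans e2.symm⟩
end
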